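/- arXiv:math/0406095 — 12 statements merged into one kernel-verified Lean document; each statement's English description precedes it below -/
import Mathlib

section
/- Let f(y) = y·e^{1−y}. Then there exists exactly one pair (α, γ) ∈ (1,∞) × (1,∞) satisfying the pair of equations γ·f(γ) + (1/α)·f(1/α) = 1 and f(γ) + f(1/α) = 1. -/
/-!
Put `p = γ - 1` and `q = 1 - 1/α`. The two equations become `q e^p = (1 + p)(p + q)` and
`(p + q)(1 - q) e^q = p`; the first is solved by `q = qOfP p`, the second by `p = pOfQ q`. So the
solutions correspond to the zeros of `defect p = p - pOfQ (qOfP p)` on the range where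
`qOfP p < 1`, that is `(1 + p)^2 < e^p`. The defect changes sign on `[4, 5]`, and it is strictly
decreasing on that range because the slopes of the two curves have product greater than one:
`-pOfQ' q ≥ (1 + q)/q^2` and `-qOfP' p > q^2/(1 + q)`. The first bound becomes a polynomial
inequality once `e^q` is enclosed by its cubic Taylor polynomial; the second holds because
`(1 + p)^2 < e^p` forces `p ≥ 2.1`.
-/

/-- The function `f(y) = y · e^{1-y}` from the large-deviations lower bound. -/
noncomputable def fLD (y : ℝ) : ℝ := y * Real.exp (1 - y)

open Real

lemma exp_sub_one_sub_pos {p : ℝ} (hp : p ≠ 0) : 0 < exp p - 1 - p := by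
  linarith [add_one_lt_exp hp]

lemma one_sub_mul_exp_lt_one {q : ℝ} (hq : q ≠ 0) : (1 - q) * exp q < 1 := by
  have h := mul_lt_mul_of_pos_right (one_sub_lt_exp_neg hq) (exp_pos q)
  rwa [← exp_add, neg_add_cancel, exp_zero] at h

lemma abs_exp_sub_cubic_taylor_le {x : ℝ} (hx : |x| ≤ 1) :
    |exp x - (1 + x + x ^ 2 / 2 + x ^ 3 / 6)| ≤ 5 * x ^ 4 / 96 := by
  have h := Real.exp_bound hx (n := 4) (by norm_num)
  have hsum : ∑ m ∈ Finset.range 4, x ^ m / m.factorial = 1 + x + x ^ 2 / 2 + x ^ 3 / 6 := by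
    norm_num [Finset.sum_range_succ, Nat.factorial]
  rw [hsum, pow_abs, abs_of_nonneg (by positivity : 0 ≤ x ^ 4)] at h
  norm_num [Nat.factorial] at h
  linarith

lemma exp_nat_bounds (n : ℕ) : 2.7182818283 ^ n ≤ exp n ∧ exp n ≤ 2.7182818286 ^ n := by
  rw [← exp_one_pow]
  exact ⟨pow_le_pow_left₀ (by norm_num) exp_one_gt_d9.le n,
    pow_le_pow_left₀ (exp_pos 1).le exp_one_lt_d9.le n⟩

lemma exp_le_one_add_sq {p : ℝ} (h0 : 0 ≤ p) (h1 : p ≤ 2.1) : exp p ≤ (1 + p) ^ 2 := by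
  have htaylor := (abs_le.1 (abs_exp_sub_cubic_taylor_le (x := 0.05) (by norm_num))).2
  have hexp : exp 1.05 ≤ 3.1 := by
    rw [show (1.05 : ℝ) = 1 + 0.05 by norm_num, exp_add]
    nlinarith [exp_one_lt_d9, exp_pos 1, exp_pos 0.05]
  have hchord : exp (p / 2) ≤ 1 + p := by
    have ht : p / 2.1 ≤ 1 := by rw [div_le_iff₀ (by norm_num)]; linarith
    have h := convexOn_exp.2 (Set.mem_univ 0) (Set.mem_univ 1.05) (sub_nonneg.2 ht)
      (by positivity : 0 ≤ p / 2.1) (by ring)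
    simp only [smul_eq_mul, mul_zero, zero_add, exp_zero, mul_one] at h
    calc exp (p / 2) = exp (p / 2.1 * 1.05) := by ring_nf
      _ ≤ 1 - p / 2.1 + p / 2.1 * exp 1.05 := h
      _ ≤ 1 - p / 2.1 + p / 2.1 * 3.1 := by gcongr
      _ = 1 + p := by ring
  calc exp p = exp (p / 2) ^ 2 := by rw [← exp_nat_mul]; ring_nf
    _ ≤ (1 + p) ^ 2 := pow_le_pow_left₀ (exp_pos _).le hchord 2

lemma le_of_one_add_sq_lt_exp {p : ℝ} (hp : 0 ≤ p) (hdom : (1 + p) ^ 2 < exp p) :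
    2.1 ≤ p :=
  le_of_not_gt fun h => (exp_le_one_add_sq hp h.le).not_gt hdom

lemma one_add_sq_lt_exp_of_le {p x : ℝ} (hp : 1 ≤ p) (hdom : (1 + p) ^ 2 < exp p)
    (hx : p ≤ x) : (1 + x) ^ 2 < exp x := by
  have hhalf : 1 + (x - p) / 2 ≤ exp ((x - p) / 2) :=
    (add_comm _ _).trans_le (add_one_le_exp _)
  calc (1 + x) ^ 2 ≤ (1 + p) ^ 2 * (1 + (x - p) / 2) ^ 2 := by
        rw [← mul_pow]; exact pow_le_pow_left₀ (by linarith) (by nlinarith) 2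
    _ < exp p * (1 + (x - p) / 2) ^ 2 := by gcongr
    _ ≤ exp p * exp ((x - p) / 2) ^ 2 := by gcongr
    _ = exp x := by rw [← exp_nat_mul, ← exp_add]; ring_nf

lemma quadratic_nonneg_of_endpoints {a b c s t u : ℝ} (ha : a ≤ 0) (hst : s ≤ t)
    (htu : t ≤ u) (hs : 0 ≤ a * s ^ 2 + b * s + c) (hu : 0 ≤ a * u ^ 2 + b * u + c) :
    0 ≤ a * t ^ 2 + b * t + c := by
  rcases hst.eq_or_lt with rfl | hst
  · exact hs
  -- with `Q x = a x^2 + b x + c`: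
  -- `(u - s) Q t = (u - t) Q s + (t - s) Q u - a (t - s) (u - t) (u - s)`
  have hcurv : 0 ≤ (t - s) * (u - t) * (-a) * (u - s) :=
    mul_nonneg (mul_nonneg (mul_nonneg (by linarith) (by linarith)) (by linarith)) (by linarith)
  nlinarith [mul_nonneg hs (sub_nonneg.2 htu), mul_nonneg hu (sub_nonneg.2 hst.le)]

noncomputable def qOfP (p : ℝ) : ℝ := (p + p ^ 2) / (exp p - 1 - p)

noncomputable def pOfQ (q : ℝ) : ℝ := (q - q ^ 2) * exp q / (1 - (1 - q) * exp q)

noncomputable def defect (p : ℝ) : ℝ := p - pOfQ (qOfP p)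

lemma qOfP_pos {p : ℝ} (hp : 0 < p) : 0 < qOfP p :=
  div_pos (by positivity) (exp_sub_one_sub_pos hp.ne')

lemma qOfP_lt_one_iff {p : ℝ} (hp : 0 < p) : qOfP p < 1 ↔ (1 + p) ^ 2 < exp p := by
  rw [qOfP, div_lt_one (exp_sub_one_sub_pos hp.ne')]
  constructor <;> intro h <;> nlinarith

lemma qOfP_eq_iff {p q : ℝ} (hp : p ≠ 0) : qOfP p = q ↔ q * exp p = (1 + p) * (p + q) := by
  rw [qOfP, div_eq_iff (exp_sub_one_sub_pos hp).ne']
  constructor <;> intro h <;> linear_combination -h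

lemma sub_pOfQ {p q : ℝ} (hq : q ≠ 0) :
    p - pOfQ q = (p - (p + q) * ((1 - q) * exp q)) / (1 - (1 - q) * exp q) := by
  have hK := (sub_pos.2 (one_sub_mul_exp_lt_one hq)).ne'
  rw [pOfQ, eq_div_iff hK, sub_mul, div_mul_cancel₀ _ hK]
  ring

lemma fLD_system_iff {p q : ℝ} (hq : q ≠ 0) :
    ((1 + p) * fLD (1 + p) + (1 - q) * fLD (1 - q) = 1 ∧ fLD (1 + p) + fLD (1 - q) = 1) ↔
      (q * exp p = (1 + p) * (p + q) ∧ (p + q) * ((1 - q) * exp q) = p) := by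
  have hf1 : fLD (1 + p) = (1 + p) * exp (-p) := by rw [fLD]; ring_nf
  have hf2 : fLD (1 - q) = (1 - q) * exp q := by rw [fLD]; ring_nf
  have hE : exp (-p) * exp p = 1 := by rw [← exp_add, neg_add_cancel, exp_zero]
  have hE0 : exp p ≠ 0 := (exp_pos p).ne'
  rw [hf1, hf2]
  constructor
  · rintro ⟨h1, h2⟩
    have hI : q * exp p = (1 + p) * (p + q) := by
      linear_combination (-exp p) * h1 + (1 - q) * exp p * h2 + (1 + p) * (p + q) * hE
    refine ⟨hI, mul_right_cancel₀ hE0 ?_⟩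
    linear_combination (p + q) * exp p * h2 - (p + q) * (1 + p) * hE + hI
  · rintro ⟨hI, hII⟩
    have hqE : q * exp p ≠ 0 := mul_ne_zero hq hE0
    constructor <;> refine mul_right_cancel₀ hqE ?_
    · linear_combination (1 + p) ^ 2 * q * hE + ((1 - q) ^ 2 * exp q - 1) * hI +
        (1 + p) * (1 - q) * hII
    · linear_combination (1 + p) * q * hE + ((1 - q) * exp q - 1) * hI + (1 + p) * hII

lemma fLD_system_iff_defect {p q : ℝ} (hp : 0 < p) (hq : q ≠ 0) :
    ((1 + p) * fLD (1 + p) + (1 - q) * fLD (1 - q) = 1 ∧ fLD (1 + p) + fLD (1 - q) = 1) ↔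
      (qOfP p = q ∧ defect p = 0) := by
  rw [fLD_system_iff hq, ← qOfP_eq_iff hp.ne']
  refine and_congr_right fun hpq => ?_
  rw [defect, hpq, sub_pOfQ hq, div_eq_zero_iff,
    or_iff_left (sub_pos.2 (one_sub_mul_exp_lt_one hq)).ne', sub_eq_zero, eq_comm]

noncomputable def negDerivQOfP (p : ℝ) : ℝ :=
  ((exp p - 1) * (p ^ 2 - p - 1) + p + 2 * p ^ 2) / (exp p - 1 - p) ^ 2

noncomputable def negDerivPOfQ (q : ℝ) : ℝ :=
  exp q * ((1 - q) ^ 2 * exp q - (1 - q - q ^ 2)) / (1 - (1 - q) * exp q) ^ 2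

lemma hasDerivAt_qOfP {p : ℝ} (hp : p ≠ 0) : HasDerivAt qOfP (-negDerivQOfP p) p := by
  have hN : HasDerivAt (fun x : ℝ => x + x ^ 2) (1 + 2 * p) p :=
    ((hasDerivAt_id' p).add (hasDerivAt_pow 2 p)).congr_deriv (by ring)
  have hD : HasDerivAt (fun x : ℝ => exp x - 1 - x) (exp p - 1) p :=
    ((hasDerivAt_exp p).sub_const 1).sub (hasDerivAt_id' p)
  exact (hN.div hD (exp_sub_one_sub_pos hp).ne').congr_deriv (by rw [negDerivQOfP]; ring)

lemma hasDerivAt_pOfQ {q : ℝ} (hq : q ≠ 0) : HasDerivAt pOfQ (-negDerivPOfQ q) q := by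
  have hN : HasDerivAt (fun x : ℝ => (x - x ^ 2) * exp x)
      ((1 - 2 * q) * exp q + (q - q ^ 2) * exp q) q :=
    (((hasDerivAt_id' q).sub (hasDerivAt_pow 2 q)).congr_deriv (by ring)).mul (hasDerivAt_exp q)
  have hK : HasDerivAt (fun x : ℝ => 1 - (1 - x) * exp x) (q * exp q) q :=
    ((((hasDerivAt_id' q).const_sub 1).mul (hasDerivAt_exp q)).const_sub 1).congr_deriv
      (by ring)
  exact (hN.div hK (sub_pos.2 (one_sub_mul_exp_lt_one hq)).ne').congr_deriv
    (by rw [negDerivPOfQ]; ring)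

lemma hasDerivAt_defect {p : ℝ} (hp : 0 < p) :
    HasDerivAt defect (1 - negDerivPOfQ (qOfP p) * negDerivQOfP p) p :=
  ((hasDerivAt_id' p).sub ((hasDerivAt_pOfQ (qOfP_pos hp).ne').comp p
    (hasDerivAt_qOfP hp.ne'))).congr_deriv (by ring)

lemma one_add_div_sq_le_negDerivPOfQ {q : ℝ} (h0 : 0 < q) (h1 : q ≤ 1) :
    (1 + q) / q ^ 2 ≤ negDerivPOfQ q := by
  have hK : 0 < 1 - (1 - q) * exp q := sub_pos.2 (one_sub_mul_exp_lt_one h0.ne')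
  rw [negDerivPOfQ, div_le_div_iff₀ (by positivity) (by positivity)]
  obtain ⟨hlo, hhi⟩ := abs_le.1 (abs_exp_sub_cubic_taylor_le (abs_le.2 ⟨by linarith, h1⟩))
  -- the difference of the two sides is a concave quadratic in `exp q`, so it suffices to check
  -- it at both ends of the Taylor enclosure of `exp q`
  suffices 0 ≤ (1 - q) ^ 2 * (q ^ 2 - q - 1) * exp q ^ 2 +
      (2 * (1 + q) * (1 - q) - q ^ 2 * (1 - q - q ^ 2)) * exp q + -(1 + q) by
    linear_combination this
  have hq2 : q ^ 2 ≤ 1 := pow_le_one₀ h0.le h1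
  have hq7 : q ^ 7 ≤ 1 := pow_le_one₀ h0.le h1
  refine quadratic_nonneg_of_endpoints (s := 1 + q + q ^ 2 / 2 + q ^ 3 / 6 - 5 * q ^ 4 / 96)
    (u := 1 + q + q ^ 2 / 2 + q ^ 3 / 6 + 5 * q ^ 4 / 96) ?_ (by linarith) (by linarith) ?_ ?_
  · nlinarith [mul_nonneg (sq_nonneg (1 - q)) (show 0 ≤ 1 + q - q ^ 2 by nlinarith)]
  · have hid : (1 - q) ^ 2 * (q ^ 2 - q - 1) *
          (1 + q + q ^ 2 / 2 + q ^ 3 / 6 - 5 * q ^ 4 / 96) ^ 2 +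
        (2 * (1 + q) * (1 - q) - q ^ 2 * (1 - q - q ^ 2)) *
          (1 + q + q ^ 2 / 2 + q ^ 3 / 6 - 5 * q ^ 4 / 96) + -(1 + q) =
        q ^ 4 * (1/4 + q/12 - 19*q^2/144 + 37*q^3/288 + 175*q^4/1024 + 953*q^5/9216
          + 17*q^6/512 - 235*q^7/9216 + 25*q^8/9216) := by ring
    rw [hid]
    have : 0 ≤ q ^ 3 := by positivity
    have : 0 ≤ q ^ 5 := by positivity
    have : 0 ≤ q ^ 6 := by positivity
    have : 0 ≤ q ^ 8 := by positivity
    have : 0 ≤ 1/4 + q/12 - 19*q^2/144 + 37*q^3/288 + 175*q^4/1024 + 953*q^5/9216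
          + 17*q^6/512 - 235*q^7/9216 + 25*q^8/9216 := by nlinarith [pow_pos h0 4]
    positivity
  · have hid : (1 - q) ^ 2 * (q ^ 2 - q - 1) *
          (1 + q + q ^ 2 / 2 + q ^ 3 / 6 + 5 * q ^ 4 / 96) ^ 2 +
        (2 * (1 + q) * (1 - q) - q ^ 2 * (1 - q - q ^ 2)) *
          (1 + q + q ^ 2 / 2 + q ^ 3 / 6 + 5 * q ^ 4 / 96) + -(1 + q) =
        q ^ 4 * (1/4 + q/12 + 11*q^2/144 + 3*q^3/32 + 935*q^4/9216 + 211*q^5/3072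
          + 17*q^6/512 + 85*q^7/9216 + 25*q^8/9216) := by ring
    rw [hid]
    positivity

lemma qOfP_sq_div_one_add_lt_negDerivQOfP {p : ℝ} (hp : 2.1 ≤ p) :
    qOfP p ^ 2 / (1 + qOfP p) < negDerivQOfP p := by
  have hD : 0 < exp p - 1 - p := exp_sub_one_sub_pos (by linarith)
  have hF : 0 ≤ exp p - 1 := by linarith
  -- a quadratic in `exp p - 1` with positive leading coefficient and negative discriminant
  have hquad : 0 < (p ^ 2 - p - 1) * (exp p - 1) ^ 2 + (p - 3 * p ^ 3) * (exp p - 1) +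
      (2 * p ^ 3 + 4 * p ^ 4 + p ^ 5) := by
    have ha : 0 < p ^ 2 - p - 1 := by nlinarith
    have hp3 : 0 ≤ (p - 2.1) ^ 3 := pow_nonneg (by linarith) 3
    have hquintic : 0 < 4 * p ^ 5 + 3 * p ^ 4 - 12 * p ^ 3 - 18 * p ^ 2 - 8 * p - 1 := by
      nlinarith [mul_nonneg hp3 (sq_nonneg p), mul_nonneg hp3 (by linarith : (0:ℝ) ≤ p)]
    have hdisc :
        (p - 3 * p ^ 3) ^ 2 < 4 * (p ^ 2 - p - 1) * (2 * p ^ 3 + 4 * p ^ 4 + p ^ 5) := by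
      nlinarith
    nlinarith [sq_nonneg (2 * (p ^ 2 - p - 1) * (exp p - 1) + (p - 3 * p ^ 3))]
  have hq : qOfP p ^ 2 / (1 + qOfP p) =
      (p + p ^ 2) ^ 2 / ((exp p - 1 - p) * (exp p - 1 - p + (p + p ^ 2))) := by
    rw [qOfP]
    field_simp
  rw [hq, negDerivQOfP, div_lt_div_iff₀ (by positivity) (by positivity)]
  nlinarith [mul_pos hD hquad]

lemma one_lt_negDerivPOfQ_mul_negDerivQOfP {p : ℝ} (hp : 0 < p) (hdom : (1 + p) ^ 2 < exp p) :
    1 < negDerivPOfQ (qOfP p) * negDerivQOfP p := by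
  have hq0 := qOfP_pos hp
  have hP := one_add_div_sq_le_negDerivPOfQ hq0 ((qOfP_lt_one_iff hp).2 hdom).le
  have hQ := qOfP_sq_div_one_add_lt_negDerivQOfP (le_of_one_add_sq_lt_exp hp.le hdom)
  calc 1 = (1 + qOfP p) / qOfP p ^ 2 * (qOfP p ^ 2 / (1 + qOfP p)) := by field_simp
    _ < negDerivPOfQ (qOfP p) * negDerivQOfP p :=
      mul_lt_mul' hP hQ (by positivity) ((by positivity : (0 : ℝ) < _).trans_le hP)

lemma defect_strictAntiOn : StrictAntiOn defect {p | 0 < p ∧ (1 + p) ^ 2 < exp p} := by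
  have hconv : Convex ℝ {p : ℝ | 0 < p ∧ (1 + p) ^ 2 < exp p} := by
    refine Set.OrdConnected.convex ⟨fun x hx y _ z hz => ⟨hx.1.trans_le hz.1, ?_⟩⟩
    have hx1 : 1 ≤ x := by linarith [le_of_one_add_sq_lt_exp hx.1.le hx.2]
    exact one_add_sq_lt_exp_of_le hx1 hx.2 hz.1
  refine strictAntiOn_of_deriv_neg hconv
    (fun x hx => (hasDerivAt_defect hx.1).continuousAt.continuousWithinAt) fun x hx => ?_
  obtain ⟨hx0, hdom⟩ := interior_subset hx
  rw [(hasDerivAt_defect hx0).deriv]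
  linarith [one_lt_negDerivPOfQ_mul_negDerivQOfP hx0 hdom]

lemma qOfP_four_mem : 0.4032 < qOfP 4 ∧ qOfP 4 < 0.40325 := by
  have h := exp_nat_bounds 4
  norm_num at h
  rw [qOfP, lt_div_iff₀ (by linarith), div_lt_iff₀ (by linarith)]
  constructor <;> nlinarith

lemma qOfP_five_mem : 0.2106 < qOfP 5 ∧ qOfP 5 < 0.2107 := by
  have h := exp_nat_bounds 5
  norm_num at h
  rw [qOfP, lt_div_iff₀ (by linarith), div_lt_iff₀ (by linarith)]
  constructor <;> nlinarith

lemma defect_four_pos : 0 < defect 4 := by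
  obtain ⟨hlo, hhi⟩ := qOfP_four_mem
  have hq0 : 0 < qOfP 4 := by linarith
  rw [defect, sub_pOfQ hq0.ne']
  refine div_pos ?_ (sub_pos.2 (one_sub_mul_exp_lt_one hq0.ne'))
  set q := qOfP 4
  have hT := (abs_le.1 (abs_exp_sub_cubic_taylor_le (abs_le.2 ⟨by linarith, by linarith⟩))).2
  have hTub : exp q < 1.49687 := by
    have : q ^ 2 < 0.40325 ^ 2 := by gcongr
    have : q ^ 3 < 0.40325 ^ 3 := by gcongr
    have : q ^ 4 < 0.40325 ^ 4 := by gcongr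
    linarith
  nlinarith [mul_lt_mul_of_pos_left hTub (by nlinarith : 0 < (4 + q) * (1 - q))]

lemma defect_five_neg : defect 5 < 0 := by
  obtain ⟨hlo, hhi⟩ := qOfP_five_mem
  have hq0 : 0 < qOfP 5 := by linarith
  rw [defect, sub_pOfQ hq0.ne']
  refine div_neg_of_neg_of_pos ?_ (sub_pos.2 (one_sub_mul_exp_lt_one hq0.ne'))
  set q := qOfP 5
  have hT := (abs_le.1 (abs_exp_sub_cubic_taylor_le (abs_le.2 ⟨by linarith, by linarith⟩))).1
  have hTlb : 1.23422 < exp q := by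
    have : 0.2106 ^ 2 < q ^ 2 := by gcongr
    have : 0.2106 ^ 3 < q ^ 3 := by gcongr
    have : q ^ 4 < 0.2107 ^ 4 := by gcongr
    linarith
  nlinarith [mul_lt_mul_of_pos_left hTlb (by nlinarith : 0 < (5 + q) * (1 - q))]

lemma exists_defect_eq_zero :
    ∃ p ∈ {p : ℝ | 0 < p ∧ (1 + p) ^ 2 < exp p}, defect p = 0 := by
  have h4 : (1 + 4 : ℝ) ^ 2 < exp 4 := by
    have h := exp_nat_bounds 4
    norm_num at h ⊢
    linarith
  have hsub : Set.Icc (4 : ℝ) 5 ⊆ {p : ℝ | 0 < p ∧ (1 + p) ^ 2 < exp p} := fun x hx =>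
    ⟨by linarith [hx.1], one_add_sq_lt_exp_of_le (by norm_num) h4 hx.1⟩
  have hcont : ContinuousOn defect (Set.Icc 4 5) := fun x hx =>
    (hasDerivAt_defect (hsub hx).1).continuousAt.continuousWithinAt
  obtain ⟨p, hp, hzero⟩ := intermediate_value_Icc' (by norm_num) hcont
    ⟨defect_five_neg.le, defect_four_pos.le⟩
  exact ⟨p, hsub hp, hzero⟩

/-- There exists exactly one pair `(α, γ) ∈ (1,∞) × (1,∞)` satisfying
`γ·f(γ) + (1/α)·f(1/α) = 1` and `f(γ) + f(1/α) = 1`. -/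
theorem stmt_0 :
    ∃! αγ : ℝ × ℝ, (1 < αγ.1 ∧ 1 < αγ.2) ∧
      αγ.2 * fLD αγ.2 + (1 / αγ.1) * fLD (1 / αγ.1) = 1 ∧
      fLD αγ.2 + fLD (1 / αγ.1) = 1 := by
  obtain ⟨p, hp, hzero⟩ := exists_defect_eq_zero
  have hq0 := qOfP_pos hp.1
  have hq1 := (qOfP_lt_one_iff hp.1).2 hp.2
  refine ⟨((1 - qOfP p)⁻¹, 1 + p), ⟨⟨?_, by linarith [hp.1]⟩, ?_⟩, ?_⟩
  · exact (one_lt_inv₀ (by linarith)).2 (by linarith)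
  · rw [one_div, inv_inv]
    exact (fLD_system_iff_defect hp.1 hq0.ne').2 ⟨rfl, hzero⟩
  rintro ⟨α, γ⟩ ⟨⟨hα, hγ⟩, hsys⟩
  obtain ⟨p', rfl⟩ : ∃ p', γ = 1 + p' := ⟨γ - 1, by ring⟩
  obtain ⟨q', hα'⟩ : ∃ q', 1 / α = 1 - q' := ⟨1 - 1 / α, by ring⟩
  have hp' : 0 < p' := by linarith
  have hq' : 0 < q' ∧ q' < 1 := by
    have : 1 / α < 1 := (div_lt_one (by linarith)).2 hα
    constructor <;> [linarith; linarith [one_div_pos.2 (by linarith : 0 < α)]]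
  rw [hα'] at hsys
  obtain ⟨rfl, hzero'⟩ := (fLD_system_iff_defect hp' hq'.1.ne').1 hsys
  obtain rfl : p' = p := defect_strictAntiOn.injOn
    ⟨hp', (qOfP_lt_one_iff hp').1 hq'.2⟩ hp (hzero'.trans hzero.symm)
  rw [← hα', one_div, inv_inv]
end

section
/- Let (α*, γ*) be the unique pair in (1,∞) × (1,∞) satisfying γ*·f(γ*) + (1/α*)·f(1/α*) = 1 and f(γ*) + f(1/α*) = 1, where f(y) = y·e^{1−y}. Then 7.5 < α*·γ* < 8.5. -/
open Real Set

lemma exp_lt_of_pow_lt {q c : ℝ} {k n : ℕ} (hq : q * n = k) (hc : 0 ≤ c)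
    (h : 2.7182818286 ^ k < c ^ n) : exp q < c := by
  refine lt_of_pow_lt_pow_left₀ n hc ?_
  rw [← exp_nat_mul, mul_comm, hq, ← exp_one_pow]
  exact (pow_le_pow_left₀ (exp_pos 1).le exp_one_lt_d9.le k).trans_lt h

lemma lt_exp_of_pow_lt {q c : ℝ} {k n : ℕ} (hq : q * n = k)
    (h : c ^ n < 2.7182818283 ^ k) : c < exp q := by
  refine lt_of_pow_lt_pow_left₀ n (exp_pos q).le ?_
  rw [← exp_nat_mul, mul_comm, hq, ← exp_one_pow]
  exact h.trans_le (pow_le_pow_left₀ (by norm_num) exp_one_gt_d9.le k)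

lemma hasDerivAt_fLD (y : ℝ) : HasDerivAt fLD ((1 - y) * exp (1 - y)) y :=
  ((hasDerivAt_id' y).mul ((hasDerivAt_id' y).const_sub 1).exp).congr_deriv (by ring)

lemma continuous_fLD : Continuous fLD := by unfold fLD; fun_prop

lemma fLD_strictMonoOn : StrictMonoOn fLD (Iic 1) := by
  refine strictMonoOn_of_deriv_pos (convex_Iic 1) continuous_fLD.continuousOn fun y hy => ?_
  rw [interior_Iic] at hy
  rw [(hasDerivAt_fLD y).deriv]
  exact mul_pos (sub_pos.2 hy) (exp_pos _)

lemma fLD_strictAntiOn : StrictAntiOn fLD (Ici 1) := by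
  refine strictAntiOn_of_deriv_neg (convex_Ici 1) continuous_fLD.continuousOn fun y hy => ?_
  rw [interior_Ici] at hy
  rw [(hasDerivAt_fLD y).deriv]
  exact mul_neg_of_neg_of_pos (sub_neg.2 hy) (exp_pos _)

lemma one_sub_sq_le_fLD {x : ℝ} (hx : 0 ≤ x) : 1 - (1 - x) ^ 2 ≤ fLD x := by
  have := mul_le_mul_of_nonneg_left (add_one_le_exp (1 - x)) hx
  unfold fLD; nlinarith

lemma fLD_le_one (y : ℝ) : fLD y ≤ 1 := by
  have := mul_le_mul_of_nonneg_right (add_one_le_exp (y - 1)) (exp_pos (1 - y)).le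
  rwa [sub_add_cancel, ← exp_add, sub_add_sub_cancel, sub_self, exp_zero] at this

lemma le_of_fLD_add_fLD_le {a b x γ : ℝ} (ha : a ≤ 1) (hx : x ≤ 1) (hb : 1 ≤ b) (hγ : 1 ≤ γ)
    (h : fLD a + fLD b ≤ fLD x + fLD γ) (hbγ : b ≤ γ) : a ≤ x := by
  have : fLD γ ≤ fLD b := fLD_strictAntiOn.antitoneOn hb hγ hbγ
  exact (fLD_strictMonoOn.le_iff_le ha hx).1 (by linarith)

lemma hasDerivAt_sq_mul_fLD (y : ℝ) :
    HasDerivAt (fun y => (y - 1) ^ 2 * fLD y) ((y - 1) * (4 * y - 1 - y ^ 2) * exp (1 - y)) y :=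
  ((((hasDerivAt_id' y).sub_const 1).pow 2).mul (hasDerivAt_fLD y)).congr_deriv
    (by unfold fLD; simp only [Pi.pow_apply]; ring)

lemma sq_mul_fLD_strictAntiOn : StrictAntiOn (fun y => (y - 1) ^ 2 * fLD y) (Ici 4) := by
  refine strictAntiOn_of_deriv_neg (convex_Ici 4)
    (((continuous_id.sub continuous_const).pow 2).mul continuous_fLD).continuousOn fun y hy => ?_
  rw [interior_Ici] at hy
  rw [(hasDerivAt_sq_mul_fLD y).deriv]
  have hy : (4 : ℝ) < y := hy
  exact mul_neg_of_neg_of_pos (mul_neg_of_pos_of_neg (by linarith) (by nlinarith)) (exp_pos _)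

noncomputable def weightedLD (c y : ℝ) : ℝ := (y - c) * fLD y

lemma hasDerivAt_weightedLD (c y : ℝ) :
    HasDerivAt (weightedLD c) (-(y ^ 2 - (c + 2) * y + c) * exp (1 - y)) y :=
  (((hasDerivAt_id' y).sub_const c).mul (hasDerivAt_fLD y)).congr_deriv (by unfold fLD; ring)

lemma continuous_weightedLD (c : ℝ) : Continuous (weightedLD c) :=
  (continuous_id.sub continuous_const).mul continuous_fLD

section Unimodal

variable {c r₁ r₂ : ℝ}

lemma deriv_weightedLD (hc : r₁ * r₂ = c) (hsum : r₁ + r₂ = c + 2) (y : ℝ) :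
    deriv (weightedLD c) y = -((y - r₁) * (y - r₂)) * exp (1 - y) := by
  rw [(hasDerivAt_weightedLD c y).deriv]
  congr 2
  linear_combination y * hsum - hc

lemma weightedLD_strictAntiOn_Iic (hc : r₁ * r₂ = c) (hsum : r₁ + r₂ = c + 2)
    (hr : r₁ ≤ r₂) : StrictAntiOn (weightedLD c) (Iic r₁) := by
  refine strictAntiOn_of_deriv_neg (convex_Iic _) (continuous_weightedLD c).continuousOn
    fun y hy => ?_
  rw [interior_Iic] at hy
  have hy : y < r₁ := hy
  rw [deriv_weightedLD hc hsum]
  exact mul_neg_of_neg_of_pos (neg_neg_of_pos (mul_pos_of_neg_of_neg (by linarith) (by linarith)))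
    (exp_pos _)

lemma weightedLD_strictMonoOn_Icc (hc : r₁ * r₂ = c) (hsum : r₁ + r₂ = c + 2) :
    StrictMonoOn (weightedLD c) (Icc r₁ r₂) := by
  refine strictMonoOn_of_deriv_pos (convex_Icc _ _) (continuous_weightedLD c).continuousOn
    fun y hy => ?_
  rw [interior_Icc] at hy
  rw [deriv_weightedLD hc hsum]
  exact mul_pos (neg_pos_of_neg (mul_neg_of_pos_of_neg (by linarith [hy.1]) (by linarith [hy.2])))
    (exp_pos _)

lemma weightedLD_strictAntiOn_Ici (hc : r₁ * r₂ = c) (hsum : r₁ + r₂ = c + 2)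
    (hr : r₁ ≤ r₂) : StrictAntiOn (weightedLD c) (Ici r₂) := by
  refine strictAntiOn_of_deriv_neg (convex_Ici _) (continuous_weightedLD c).continuousOn
    fun y hy => ?_
  rw [interior_Ici] at hy
  have hy : r₂ < y := hy
  rw [deriv_weightedLD hc hsum]
  exact mul_neg_of_neg_of_pos (neg_neg_of_pos (mul_pos (by linarith) (by linarith))) (exp_pos _)

lemma weightedLD_isMinOn (hc : r₁ * r₂ = c) (hsum : r₁ + r₂ = c + 2)
    (hr : r₁ ≤ r₂) : IsMinOn (weightedLD c) (Iic r₂) r₁ := by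
  intro y (hy : y ≤ r₂)
  rcases le_total y r₁ with h | h
  · exact (weightedLD_strictAntiOn_Iic hc hsum hr).antitoneOn h (mem_Iic.2 le_rfl) h
  · exact (weightedLD_strictMonoOn_Icc hc hsum).monotoneOn ⟨le_rfl, hr⟩ ⟨h, hy⟩ h

lemma weightedLD_isMaxOn (hc : r₁ * r₂ = c) (hsum : r₁ + r₂ = c + 2)
    (hr : r₁ ≤ r₂) : IsMaxOn (weightedLD c) (Ici r₁) r₂ := by
  intro y (hy : r₁ ≤ y)
  rcases le_total y r₂ with h | h
  · exact (weightedLD_strictMonoOn_Icc hc hsum).monotoneOn ⟨hy, h⟩ ⟨hr, le_rfl⟩ h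
  · exact (weightedLD_strictAntiOn_Ici hc hsum hr).antitoneOn (mem_Ici.2 le_rfl) h h

lemma weightedLD_le_max (hc : r₁ * r₂ = c) (hsum : r₁ + r₂ = c + 2) (hr : r₁ ≤ r₂)
    {a b y : ℝ} (hay : a ≤ y) (hyb : y ≤ b) (hb : b ≤ r₂) :
    weightedLD c y ≤ max (weightedLD c a) (weightedLD c b) := by
  rcases le_total y r₁ with h | h
  · exact le_max_of_le_left <|
      (weightedLD_strictAntiOn_Iic hc hsum hr).antitoneOn (hay.trans h) h hay
  · exact le_max_of_le_right <|
      (weightedLD_strictMonoOn_Icc hc hsum).monotoneOn ⟨h, hyb.trans hb⟩ ⟨h.trans hyb, hb⟩ hyb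

lemma min_le_weightedLD (hc : r₁ * r₂ = c) (hsum : r₁ + r₂ = c + 2) (hr : r₁ ≤ r₂)
    {a b y : ℝ} (ha : r₁ ≤ a) (hay : a ≤ y) (hyb : y ≤ b) :
    min (weightedLD c a) (weightedLD c b) ≤ weightedLD c y := by
  rcases le_total y r₂ with h | h
  · exact min_le_of_left_le <|
      (weightedLD_strictMonoOn_Icc hc hsum).monotoneOn ⟨ha, hay.trans h⟩ ⟨ha.trans hay, h⟩ hay
  · exact min_le_of_right_le <|
      (weightedLD_strictAntiOn_Ici hc hsum hr).antitoneOn h (h.trans hyb) hyb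

end Unimodal

structure IsLDSolution (x γ : ℝ) : Prop where
  pos : 0 < x
  lt_one : x < 1
  one_lt : 1 < γ
  fLD_add : fLD x + fLD γ = 1
  mul_fLD_add : x * fLD x + γ * fLD γ = 1

namespace IsLDSolution

variable {x γ : ℝ}

lemma weightedLD_add (h : IsLDSolution x γ) (c : ℝ) :
    weightedLD c x + weightedLD c γ = 1 - c := by
  unfold weightedLD
  linear_combination h.mul_fLD_add - c * h.fLD_add

lemma one_sub_fLD_sq_le (h : IsLDSolution x γ) : (1 - fLD γ) ^ 2 ≤ (γ - 1) ^ 2 * fLD γ := by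
  have ht : 0 < fLD γ := mul_pos (by linarith [h.one_lt]) (exp_pos _)
  have hline : (γ - 1) * fLD γ = (1 - x) * (1 - fLD γ) := by
    have := h.weightedLD_add 1
    unfold weightedLD at this
    linear_combination this + (1 - x) * h.fLD_add
  have hsq : fLD γ ≤ (1 - x) ^ 2 := by linarith [one_sub_sq_le_fLD h.pos.le, h.fLD_add]
  have : fLD γ * (1 - fLD γ) ^ 2 ≤ fLD γ * ((γ - 1) ^ 2 * fLD γ) :=
    calc fLD γ * (1 - fLD γ) ^ 2 ≤ (1 - x) ^ 2 * (1 - fLD γ) ^ 2 :=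
          mul_le_mul_of_nonneg_right hsq (sq_nonneg _)
      _ = fLD γ * ((γ - 1) ^ 2 * fLD γ) := by rw [← mul_pow, ← hline]; ring
  exact le_of_mul_le_mul_left this ht

lemma seven_halves_lt (h : IsLDSolution x γ) : 7 / 2 < γ := by
  have key : 1 ≤ weightedLD 0 (7 / 2) := by
    have e := exp_lt_of_pow_lt (q := 5 / 2) (c := 12.2) (k := 5) (n := 2) (by norm_num)
      (by norm_num) (by norm_num)
    simp only [weightedLD, fLD]; norm_num [exp_neg]
    linarith [inv_strictAnti₀ (exp_pos _) e]
  have hx : 0 < weightedLD 0 x := mul_pos (by simpa using h.pos) (mul_pos h.pos (exp_pos _))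
  have h1 : weightedLD 0 1 = 1 := by norm_num [weightedLD, fLD]
  by_contra! hγ
  have := min_le_weightedLD (c := 0) (r₁ := 0) (r₂ := 2) (by norm_num) (by norm_num) (by norm_num)
    zero_le_one h.one_lt.le hγ
  rw [h1, min_eq_left key] at this
  linarith [h.weightedLD_add 0]

lemma lt_thirteen_halves (h : IsLDSolution x γ) : γ < 13 / 2 := by
  have key : (13 / 2 - 1) ^ 2 * fLD (13 / 2) < (1 - fLD (13 / 2)) ^ 2 := by
    have e := lt_exp_of_pow_lt (q := 11 / 2) (c := 220) (k := 11) (n := 2) (by norm_num)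
      (by norm_num)
    simp only [fLD]; norm_num [exp_neg]
    nlinarith [inv_strictAnti₀ (by norm_num) e, inv_pos.2 (exp_pos (11 / 2))]
  by_contra! hγ
  have hw : (γ - 1) ^ 2 * fLD γ ≤ (13 / 2 - 1) ^ 2 * fLD (13 / 2) :=
    sq_mul_fLD_strictAntiOn.antitoneOn (by norm_num) (by simp only [mem_Ici]; linarith) hγ
  have hf : fLD γ ≤ fLD (13 / 2) :=
    fLD_strictAntiOn.antitoneOn (by norm_num) (by simp only [mem_Ici]; linarith) hγ
  have : (1 - fLD (13 / 2)) ^ 2 ≤ (1 - fLD γ) ^ 2 :=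
    pow_le_pow_left₀ (by linarith [fLD_le_one (13 / 2)]) (by linarith) 2
  linarith [h.one_sub_fLD_sq_le]

lemma le_four_fifths (h : IsLDSolution x γ) : x ≤ 4 / 5 := by
  have key : 1 ≤ fLD (4 / 5) + fLD (13 / 2) := by
    have e₁ := lt_exp_of_pow_lt (q := 1 / 5) (c := 1.2214) (k := 1) (n := 5) (by norm_num)
      (by norm_num)
    have e₂ := exp_lt_of_pow_lt (q := 11 / 2) (c := 245) (k := 11) (n := 2) (by norm_num)
      (by norm_num) (by norm_num)
    simp only [fLD]; norm_num [exp_neg]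
    linarith [inv_strictAnti₀ (exp_pos _) e₂]
  exact le_of_fLD_add_fLD_le h.lt_one.le (by norm_num) h.one_lt.le (by norm_num)
    (by linarith [h.fLD_add]) h.lt_thirteen_halves.le

lemma lt_two_thirds (h : IsLDSolution x γ) : x < 2 / 3 := by
  have key (y : ℝ) (hy : y = 2 / 3 ∨ y = 4 / 5) :
      weightedLD (15 / 4) y + weightedLD (15 / 4) 5 < -11 / 4 := by
    have e₁ := lt_exp_of_pow_lt (q := 1 / 3) (c := 1.3956) (k := 1) (n := 3) (by norm_num)
      (by norm_num)
    have e₂ := lt_exp_of_pow_lt (q := 1 / 5) (c := 1.2214) (k := 1) (n := 5) (by norm_num)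
      (by norm_num)
    have e₃ := lt_exp_of_pow_lt (q := 4) (c := 54.59) (k := 4) (n := 1) (by norm_num)
      (by norm_num)
    rcases hy with rfl | rfl <;> simp only [weightedLD, fLD] <;> norm_num [exp_neg] <;>
      linarith [inv_strictAnti₀ (by norm_num) e₃]
  have hγ : weightedLD (15 / 4) γ ≤ weightedLD (15 / 4) 5 :=
    weightedLD_isMaxOn (c := 15 / 4) (r₁ := 3 / 4) (by norm_num) (by norm_num) (by norm_num)
      (by simp only [mem_Ici]; linarith [h.one_lt])
  by_contra! hx
  have hx := weightedLD_le_max (c := 15 / 4) (r₁ := 3 / 4) (r₂ := 5) (by norm_num) (by norm_num)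
    (by norm_num) hx h.le_four_fifths (by norm_num)
  rcases le_max_iff.1 hx with hx | hx <;>
    linarith [key _ (.inl rfl), key _ (.inr rfl), h.weightedLD_add (15 / 4)]

lemma twenty_six_fifths_lt (h : IsLDSolution x γ) : 26 / 5 < γ := by
  have key (y : ℝ) (hy : y = 7 / 2 ∨ y = 26 / 5) :
      -5 / 3 < weightedLD (8 / 3) y + weightedLD (8 / 3) (2 / 3) := by
    have e₁ := exp_lt_of_pow_lt (q := 1 / 3) (c := 1.39562) (k := 1) (n := 3) (by norm_num)
      (by norm_num) (by norm_num)
    have e₂ := exp_lt_of_pow_lt (q := 5 / 2) (c := 12.2) (k := 5) (n := 2) (by norm_num)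
      (by norm_num) (by norm_num)
    have e₃ := exp_lt_of_pow_lt (q := 21 / 5) (c := 66.69) (k := 21) (n := 5) (by norm_num)
      (by norm_num) (by norm_num)
    rcases hy with rfl | rfl <;> simp only [weightedLD, fLD] <;> norm_num [exp_neg] <;>
      linarith [inv_strictAnti₀ (exp_pos _) e₂, inv_strictAnti₀ (exp_pos _) e₃]
  have hx : weightedLD (8 / 3) (2 / 3) ≤ weightedLD (8 / 3) x :=
    weightedLD_isMinOn (c := 8 / 3) (r₂ := 4) (by norm_num) (by norm_num) (by norm_num)
      (by simp only [mem_Iic]; linarith [h.lt_one])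
  by_contra! hγ
  have hγ := min_le_weightedLD (c := 8 / 3) (r₁ := 2 / 3) (r₂ := 4) (by norm_num) (by norm_num)
    (by norm_num) (by norm_num) h.seven_halves_lt.le hγ
  rcases min_le_iff.1 hγ with hγ | hγ <;>
    linarith [key _ (.inl rfl), key _ (.inr rfl), h.weightedLD_add (8 / 3)]

lemma sixteen_twenty_fifths_le (h : IsLDSolution x γ) : 16 / 25 ≤ x := by
  have key : fLD (16 / 25) + fLD (26 / 5) ≤ 1 := by
    have e₁ := exp_lt_of_pow_lt (q := 9 / 25) (c := 1.4334) (k := 9) (n := 25) (by norm_num)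
      (by norm_num) (by norm_num)
    have e₂ := lt_exp_of_pow_lt (q := 21 / 5) (c := 66.6) (k := 21) (n := 5) (by norm_num)
      (by norm_num)
    simp only [fLD]; norm_num [exp_neg]
    linarith [inv_strictAnti₀ (by norm_num) e₂]
  exact le_of_fLD_add_fLD_le (by norm_num) h.lt_one.le (by norm_num) h.one_lt.le
    (by linarith [h.fLD_add]) h.twenty_six_fifths_lt.le

lemma lt_twenty_seven_fifths (h : IsLDSolution x γ) : γ < 27 / 5 := by
  have key : fLD (2 / 3) + fLD (27 / 5) ≤ 1 := by
    have e₁ := exp_lt_of_pow_lt (q := 1 / 3) (c := 1.3957) (k := 1) (n := 3) (by norm_num)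
      (by norm_num) (by norm_num)
    have e₂ := lt_exp_of_pow_lt (q := 22 / 5) (c := 81.4) (k := 22) (n := 5) (by norm_num)
      (by norm_num)
    simp only [fLD]; norm_num [exp_neg]
    linarith [inv_strictAnti₀ (by norm_num) e₂]
  by_contra! hγ
  have := le_of_fLD_add_fLD_le (a := 2 / 3) (by norm_num) h.lt_one.le (by norm_num) h.one_lt.le
    (by linarith [h.fLD_add]) hγ
  linarith [h.lt_two_thirds]

lemma div_mem_Ioo (h : IsLDSolution x γ) : γ / x ∈ Ioo 7.5 8.5 := by
  have hx := h.pos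
  constructor
  · rw [lt_div_iff₀ hx]; nlinarith [h.lt_two_thirds, h.twenty_six_fifths_lt]
  · rw [div_lt_iff₀ hx]; nlinarith [h.sixteen_twenty_fifths_le, h.lt_twenty_seven_fifths]

end IsLDSolution

/-- If `(α*, γ*)` is the (unique) pair in `(1,∞) × (1,∞)` satisfying
`γ*·f(γ*) + (1/α*)·f(1/α*) = 1` and `f(γ*) + f(1/α*) = 1`, then
`7.5 < α*·γ* < 8.5`. -/
theorem stmt_1 (α γ : ℝ) (hα : 1 < α) (hγ : 1 < γ)
    (h1 : γ * fLD γ + (1 / α) * fLD (1 / α) = 1)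
    (h2 : fLD γ + fLD (1 / α) = 1) :
    7.5 < α * γ ∧ α * γ < 8.5 := by
  have hsol : IsLDSolution (1 / α) γ :=
    ⟨by positivity, (div_lt_one (by linarith)).2 hα, hγ, by linarith, by linarith⟩
  simpa [div_eq_mul_inv, mul_comm] using hsol.div_mem_Ioo
end

section
/- Assume additionally that ∑_{j=0}^a p₁(j) = 0 (the case 𝒳₃ = ∅) and ∑_{j=0}^a p₂(j) > 0, and for p ∈ [0,1] and ξ ∈ ℝ set Q₀(ξ,p) = 1 − e^ξ·∑_{j=0}^a p₂(j)·p^j·e^{jξ} − (1−p)·e^ξ·∑_{j=0}^{max(a,b)} (q(j)+p₂(j))·∑_{i=0}^{j−1} p^i·e^{iξ}. Then for every p ∈ [0,1] the function ξ ↦ Q₀(ξ,p) has exactly one root in (0,∞). -/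
open Finset

noncomputable def Q0 (a b : ℕ) (p₂ q : ℕ → ℝ) (ξ p : ℝ) : ℝ :=
  1 - Real.exp ξ * ∑ j ∈ Finset.range (a + 1), p₂ j * p ^ j * Real.exp (j * ξ)
    - (1 - p) * Real.exp ξ * ∑ j ∈ Finset.range (max a b + 1),
        (q j + p₂ j) * ∑ i ∈ Finset.range j, p ^ i * Real.exp (i * ξ)

/-- In the case `𝒳₃ = ∅` (i.e. `∑ p₁ = 0`) with `∑ p₂ > 0`, for every `p ∈ [0,1]`
the function `ξ ↦ Q₀(ξ,p)` has exactly one root in `(0,∞)`. -/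
theorem stmt_2 (a b : ℕ) (p₁ p₂ q : ℕ → ℝ)
    (hp₁ : ∀ j, 0 ≤ p₁ j) (hp₂ : ∀ j, 0 ≤ p₂ j) (hq : ∀ j, 0 ≤ q j)
    (hp₁a : ∀ j, a < j → p₁ j = 0) (hp₂a : ∀ j, a < j → p₂ j = 0)
    (hqb : ∀ j, b < j → q j = 0) (hq0 : 0 < q 0)
    (hsum : ∑ j ∈ Finset.range (a + 1), p₁ j + ∑ j ∈ Finset.range (a + 1), p₂ j
      + ∑ j ∈ Finset.range (b + 1), q j = 1)
    (hX₃ : ∑ j ∈ Finset.range (a + 1), p₁ j = 0)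
    (hp₂pos : 0 < ∑ j ∈ Finset.range (a + 1), p₂ j) :
    ∀ p ∈ Set.Icc (0 : ℝ) 1, ∃! ξ : ℝ, 0 < ξ ∧ Q0 a b p₂ q ξ p = 0 := by
  intro p hp
  obtain ⟨hp0, hp1⟩ := hp
  set N := max a b + 1 with hN
  set S : ℝ → ℝ := fun ξ => ∑ j ∈ Finset.range (a + 1), p₂ j * p ^ j * Real.exp (j * ξ)
    with hSdef
  set T : ℝ → ℝ := fun ξ => ∑ j ∈ Finset.range N,
    (q j + p₂ j) * ∑ i ∈ Finset.range j, p ^ i * Real.exp (i * ξ) with hTdef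
  set g : ℝ → ℝ := fun ξ => S ξ + (1 - p) * T ξ with hgdef
  have hQ : ∀ ξ, Q0 a b p₂ q ξ p = 1 - Real.exp ξ * g ξ := by
    intro ξ; simp only [Q0, hgdef, hSdef, hTdef]; ring
  have haN : a + 1 ≤ N := by omega
  have hbN : b + 1 ≤ N := by omega
  have hp₂N : ∑ j ∈ Finset.range N, p₂ j = ∑ j ∈ Finset.range (a + 1), p₂ j := by
    rw [Finset.sum_subset (Finset.range_subset_range.2 haN)]
    intro j _ hj
    exact hp₂a j (by simpa using hj)
  have hqN : ∑ j ∈ Finset.range N, q j = ∑ j ∈ Finset.range (b + 1), q j := by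
    rw [Finset.sum_subset (Finset.range_subset_range.2 hbN)]
    intro j _ hj
    exact hqb j (by simpa using hj)
  have hsum' : ∑ j ∈ Finset.range N, (q j + p₂ j) = 1 := by
    rw [Finset.sum_add_distrib, hp₂N, hqN]
    linarith
  have hS0 : S 0 = ∑ j ∈ Finset.range N, p₂ j * p ^ j := by
    rw [hSdef]
    simp only [mul_zero, Real.exp_zero, mul_one]
    rw [Finset.sum_subset (Finset.range_subset_range.2 haN)]
    intro j _ hj
    rw [hp₂a j (by simpa using hj)]; ring
  have hg0 : g 0 = 1 - ∑ j ∈ Finset.range N, q j * p ^ j := by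
    have hT0 : (1 - p) * T 0 = ∑ j ∈ Finset.range N, (q j + p₂ j) * (1 - p ^ j) := by
      rw [hTdef]
      simp only [mul_zero, Real.exp_zero, mul_one]
      rw [Finset.mul_sum]
      refine Finset.sum_congr rfl fun j _ => ?_
      linear_combination (-(q j + p₂ j)) * geom_sum_mul p j
    rw [hgdef]
    simp only
    rw [hS0, hT0, ← Finset.sum_add_distrib]
    have : ∑ j ∈ Finset.range N, (p₂ j * p ^ j + (q j + p₂ j) * (1 - p ^ j))
        = ∑ j ∈ Finset.range N, ((q j + p₂ j) - q j * p ^ j) := by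
      refine Finset.sum_congr rfl fun j _ => ?_; ring
    rw [this, Finset.sum_sub_distrib, hsum']
  have hpow : ∀ j : ℕ, 0 ≤ p ^ j ∧ p ^ j ≤ 1 := fun j =>
    ⟨pow_nonneg hp0 j, pow_le_one₀ hp0 hp1⟩
  have hqp_le : ∑ j ∈ Finset.range N, q j * p ^ j ≤ ∑ j ∈ Finset.range N, q j := by
    refine Finset.sum_le_sum fun j _ => ?_
    nlinarith [hq j, (hpow j).1, (hpow j).2]
  have hqp_ge : q 0 ≤ ∑ j ∈ Finset.range N, q j * p ^ j := by
    have h0 : 0 ∈ Finset.range N := by simp [hN]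
    have := Finset.single_le_sum (f := fun j => q j * p ^ j)
      (fun j _ => mul_nonneg (hq j) (hpow j).1) h0
    simpa using this
  have hqsum_le : ∑ j ∈ Finset.range N, q j ≤ 1 - ∑ j ∈ Finset.range (a + 1), p₂ j := by
    rw [hqN]; linarith
  have hg0pos : 0 < g 0 := by rw [hg0]; linarith
  have hg0lt : g 0 < 1 := by rw [hg0]; linarith
  -- monotonicity of g
  have hterm : ∀ (i : ℕ) (x y : ℝ), x ≤ y →
      p ^ i * Real.exp (i * x) ≤ p ^ i * Real.exp (i * y) := by
    intro i x y hxy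
    exact mul_le_mul_of_nonneg_left
      (Real.exp_le_exp.2 (mul_le_mul_of_nonneg_left hxy (Nat.cast_nonneg i))) (hpow i).1
  have hgmono : Monotone g := by
    intro x y hxy
    refine add_le_add (Finset.sum_le_sum fun j _ => ?_)
      (mul_le_mul_of_nonneg_left (Finset.sum_le_sum fun j _ => ?_) (by linarith))
    · rw [mul_assoc, mul_assoc]
      exact mul_le_mul_of_nonneg_left (hterm j x y hxy) (hp₂ j)
    · exact mul_le_mul_of_nonneg_left (Finset.sum_le_sum fun i _ => hterm i x y hxy)
        (add_nonneg (hq j) (hp₂ j))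
  -- the function F
  set F : ℝ → ℝ := fun ξ => Real.exp ξ * g ξ with hFdef
  have hgpos : ∀ x, 0 ≤ x → 0 < g x := fun x hx => lt_of_lt_of_le hg0pos (hgmono hx)
  have hFmono : StrictMonoOn F (Set.Ici 0) := by
    intro x hx y hy hxy
    calc Real.exp x * g x < Real.exp y * g x :=
          mul_lt_mul_of_pos_right (Real.exp_lt_exp.2 hxy) (hgpos x hx)
      _ ≤ Real.exp y * g y :=
          mul_le_mul_of_nonneg_left (hgmono hxy.le) (Real.exp_pos y).le
  have hc : ∀ i : ℕ, Continuous fun ξ : ℝ => p ^ i * Real.exp (i * ξ) := by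
    intro i; fun_prop
  have hFcont : Continuous F := by
    rw [hFdef, hgdef, hSdef, hTdef]
    apply Continuous.mul Real.continuous_exp
    apply Continuous.add
    · exact continuous_finset_sum _ fun j _ =>
        Continuous.mul (Continuous.mul continuous_const continuous_const)
          (by fun_prop)
    · exact Continuous.mul continuous_const
        (continuous_finset_sum _ fun j _ =>
          Continuous.mul continuous_const (continuous_finset_sum _ fun i _ => hc i))
  -- find X with F X ≥ 2
  set X : ℝ := Real.log (2 / g 0) with hXdef
  have h2g : 1 < 2 / g 0 := by
    rw [lt_div_iff₀ hg0pos]; linarith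
  have hXpos : 0 < X := Real.log_pos h2g
  have hFX : 2 ≤ F X := by
    have hexp : Real.exp X = 2 / g 0 := Real.exp_log (by linarith)
    have hFXeq : F X = Real.exp X * g X := rfl
    have hgX : g 0 ≤ g X := hgmono hXpos.le
    rw [hFXeq, hexp]
    calc (2 : ℝ) = (2 / g 0) * g 0 := by field_simp
      _ ≤ (2 / g 0) * g X := mul_le_mul_of_nonneg_left hgX (by positivity)
  have hF0 : F 0 = g 0 := by simp [hFdef]
  -- IVT
  have hIVT := intermediate_value_Icc hXpos.le hFcont.continuousOn
  have h1mem : (1 : ℝ) ∈ Set.Icc (F 0) (F X) := ⟨by rw [hF0]; linarith, by linarith⟩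
  obtain ⟨ξ, hξmem, hξeq⟩ := hIVT h1mem
  have hξpos : 0 < ξ := by
    rcases lt_or_eq_of_le hξmem.1 with h | h
    · exact h
    · exfalso; rw [← h] at hξeq; rw [hF0] at hξeq; linarith
  have hFeq : ∀ z, F z = Real.exp z * g z := fun z => rfl
  refine ⟨ξ, ⟨hξpos, by rw [hQ, ← hFeq, hξeq]; ring⟩, ?_⟩
  rintro y ⟨hy, hQy⟩
  have hFy : F y = 1 := by
    have := hQ y
    rw [hQy] at this
    rw [hFeq]; linarith
  exact hFmono.injOn (Set.mem_Ici.2 hy.le) (Set.mem_Ici.2 hξpos.le) (by rw [hFy, hξeq])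
end

section
/- Assume additionally that ∑_{j=0}^a p₁(j) > 0 (the case 𝒳₃ ≠ ∅). Then for every p ∈ [0,1) there is exactly one ξ ∈ ℝ with 0 < ξ, p·e^ξ < 1 (i.e. ξ ∈ (0, −log p), with −log 0 = +∞), and Q(ξ,p) = 0. -/
open Finset

/-- The function `Q(ξ,p)` from Theorem 1 of the paper. -/
noncomputable def Qfun (a b : ℕ) (p₁ p₂ q : ℕ → ℝ) (ξ p : ℝ) : ℝ :=
  1 - ((1 - p) * Real.exp ξ / (1 - p * Real.exp ξ)) * ∑ j ∈ Finset.range (a + 1), p₁ j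
    - Real.exp ξ * ∑ j ∈ Finset.range (a + 1), p₂ j * p ^ j * Real.exp (j * ξ)
    - (1 - p) * Real.exp ξ * ∑ j ∈ Finset.range (max a b + 1),
        (q j + p₂ j) * ∑ i ∈ Finset.range j, p ^ i * Real.exp (i * ξ)

/-- In the case `𝒳₃ ≠ ∅` (i.e. `∑ p₁ > 0`), for every `p ∈ [0,1)` there is exactly one
`ξ` with `0 < ξ`, `p·e^ξ < 1` and `Q(ξ,p) = 0`. -/
theorem stmt_3 (a b : ℕ) (p₁ p₂ q : ℕ → ℝ)
    (hp₁ : ∀ j, 0 ≤ p₁ j) (hp₂ : ∀ j, 0 ≤ p₂ j) (hq : ∀ j, 0 ≤ q j)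
    (hp₁a : ∀ j, a < j → p₁ j = 0) (hp₂a : ∀ j, a < j → p₂ j = 0)
    (hqb : ∀ j, b < j → q j = 0) (hq0 : 0 < q 0)
    (hsum : ∑ j ∈ Finset.range (a + 1), p₁ j + ∑ j ∈ Finset.range (a + 1), p₂ j
      + ∑ j ∈ Finset.range (b + 1), q j = 1)
    (hX₃ : 0 < ∑ j ∈ Finset.range (a + 1), p₁ j) :
    ∀ p ∈ Set.Ico (0 : ℝ) 1,
      ∃! ξ : ℝ, 0 < ξ ∧ p * Real.exp ξ < 1 ∧ Qfun a b p₁ p₂ q ξ p = 0 := by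
  intro p hp
  obtain ⟨hp0, hp1⟩ := hp
  have hp1' : (0:ℝ) < 1 - p := by linarith
  set M := max a b with hM
  set S₁ := ∑ j ∈ Finset.range (a+1), p₁ j with hS₁def
  -- Rewrite Qfun in a convenient form
  have hQrw : ∀ ξ : ℝ, Qfun a b p₁ p₂ q ξ p
      = 1 - (1 - p) * Real.exp ξ / (1 - p * Real.exp ξ) * S₁
        - Real.exp ξ * ∑ j ∈ Finset.range (a + 1), p₂ j * (p * Real.exp ξ) ^ j
        - (1 - p) * Real.exp ξ * ∑ j ∈ Finset.range (M + 1),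
            (q j + p₂ j) * ∑ i ∈ Finset.range j, (p * Real.exp ξ) ^ i := by
    intro ξ
    unfold Qfun
    rw [← hM, ← hS₁def]
    have h1 : ∑ j ∈ Finset.range (a+1), p₂ j * p ^ j * Real.exp (j * ξ)
        = ∑ j ∈ Finset.range (a+1), p₂ j * (p * Real.exp ξ) ^ j := by
      refine Finset.sum_congr rfl fun j _ => ?_
      rw [Real.exp_nat_mul]; ring
    have h2 : ∑ j ∈ Finset.range (M+1),
          (q j + p₂ j) * ∑ i ∈ Finset.range j, p ^ i * Real.exp (i * ξ)
        = ∑ j ∈ Finset.range (M+1),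
          (q j + p₂ j) * ∑ i ∈ Finset.range j, (p * Real.exp ξ) ^ i := by
      refine Finset.sum_congr rfl fun j _ => ?_
      congr 1
      refine Finset.sum_congr rfl fun i _ => ?_
      rw [Real.exp_nat_mul]; ring
    rw [h1, h2]
  -- strict monotonicity
  have hmono : ∀ ξ ξ' : ℝ, ξ < ξ' → p * Real.exp ξ' < 1 →
      Qfun a b p₁ p₂ q ξ' p < Qfun a b p₁ p₂ q ξ p := by
    intro ξ ξ' hlt hlt1
    rw [hQrw, hQrw]
    have hE : Real.exp ξ < Real.exp ξ' := Real.exp_lt_exp.2 hlt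
    have hEpos : 0 < Real.exp ξ := Real.exp_pos ξ
    have hE'pos : 0 < Real.exp ξ' := Real.exp_pos ξ'
    have ht : p * Real.exp ξ ≤ p * Real.exp ξ' := by nlinarith
    have htpos : 0 ≤ p * Real.exp ξ := mul_nonneg hp0 hEpos.le
    have hd : 0 < 1 - p * Real.exp ξ := by linarith
    have hd' : 0 < 1 - p * Real.exp ξ' := by linarith
    have hA : (1-p) * Real.exp ξ / (1 - p * Real.exp ξ) * S₁ <
              (1-p) * Real.exp ξ' / (1 - p * Real.exp ξ') * S₁ := by
      apply mul_lt_mul_of_pos_right _ hX₃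
      rw [div_lt_div_iff₀ hd hd']
      nlinarith
    have hB : Real.exp ξ * ∑ j ∈ Finset.range (a+1), p₂ j * (p * Real.exp ξ) ^ j ≤
              Real.exp ξ' * ∑ j ∈ Finset.range (a+1), p₂ j * (p * Real.exp ξ') ^ j := by
      apply mul_le_mul hE.le
      · refine Finset.sum_le_sum fun j _ => ?_
        exact mul_le_mul_of_nonneg_left (pow_le_pow_left₀ htpos ht j) (hp₂ j)
      · exact Finset.sum_nonneg fun j _ => mul_nonneg (hp₂ j) (pow_nonneg htpos j)
      · exact hE'pos.le
    have hC : (1-p) * Real.exp ξ * ∑ j ∈ Finset.range (M+1),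
                (q j + p₂ j) * ∑ i ∈ Finset.range j, (p * Real.exp ξ) ^ i ≤
              (1-p) * Real.exp ξ' * ∑ j ∈ Finset.range (M+1),
                (q j + p₂ j) * ∑ i ∈ Finset.range j, (p * Real.exp ξ') ^ i := by
      apply mul_le_mul (by nlinarith)
      · refine Finset.sum_le_sum fun j _ => ?_
        refine mul_le_mul_of_nonneg_left ?_ (add_nonneg (hq j) (hp₂ j))
        exact Finset.sum_le_sum fun i _ => pow_le_pow_left₀ htpos ht i
      · refine Finset.sum_nonneg fun j _ => mul_nonneg (add_nonneg (hq j) (hp₂ j))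
          (Finset.sum_nonneg fun i _ => pow_nonneg htpos i)
      · positivity
    linarith
  -- value at 0
  have hQ0 : Qfun a b p₁ p₂ q 0 p = ∑ j ∈ Finset.range (M+1), q j * p ^ j := by
    have hgeom : ∀ j : ℕ, (1-p) * ∑ i ∈ Finset.range j, p ^ i = 1 - p ^ j := by
      intro j
      linear_combination (-1 : ℝ) * geom_sum_mul p j
    rw [hQrw 0, Real.exp_zero]
    simp only [mul_one, one_mul]
    rw [div_self hp1'.ne', one_mul]
    have hterm : ∀ j ∈ Finset.range (M+1),
        (1-p) * ((q j + p₂ j) * ∑ i ∈ Finset.range j, p ^ i)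
        = (q j + p₂ j) - (q j * p ^ j + p₂ j * p ^ j) := by
      intro j _
      linear_combination (q j + p₂ j) * hgeom j
    have hCval : (1-p) * ∑ j ∈ Finset.range (M+1),
        ((q j + p₂ j) * ∑ i ∈ Finset.range j, p ^ i)
        = (∑ j ∈ Finset.range (M+1), q j + ∑ j ∈ Finset.range (M+1), p₂ j)
          - (∑ j ∈ Finset.range (M+1), q j * p ^ j
             + ∑ j ∈ Finset.range (M+1), p₂ j * p ^ j) := by
      rw [Finset.mul_sum, Finset.sum_congr rfl hterm, Finset.sum_sub_distrib,
        Finset.sum_add_distrib, Finset.sum_add_distrib]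
    rw [hCval]
    have hsub : Finset.range (b+1) ⊆ Finset.range (M+1) := by
      apply Finset.range_subset_range.2; omega
    have hsub' : Finset.range (a+1) ⊆ Finset.range (M+1) := by
      apply Finset.range_subset_range.2; omega
    have e1 : ∑ j ∈ Finset.range (M+1), q j = ∑ j ∈ Finset.range (b+1), q j := by
      refine (Finset.sum_subset hsub fun j _ hj => ?_).symm
      exact hqb j (by simp only [Finset.mem_range] at hj; omega)
    have e2 : ∑ j ∈ Finset.range (M+1), p₂ j = ∑ j ∈ Finset.range (a+1), p₂ j := by
      refine (Finset.sum_subset hsub' fun j _ hj => ?_).symm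
      exact hp₂a j (by simp only [Finset.mem_range] at hj; omega)
    have e3 : ∑ j ∈ Finset.range (M+1), p₂ j * p ^ j
        = ∑ j ∈ Finset.range (a+1), p₂ j * p ^ j := by
      refine (Finset.sum_subset hsub' fun j _ hj => ?_).symm
      rw [hp₂a j (by simp only [Finset.mem_range] at hj; omega)]; ring
    rw [e1, e2, e3]
    linarith
  have hQ0pos : 0 < Qfun a b p₁ p₂ q 0 p := by
    rw [hQ0]
    have h0mem : 0 ∈ Finset.range (M+1) := by simp
    calc (0:ℝ) < q 0 * p ^ 0 := by simpa using hq0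
      _ ≤ ∑ j ∈ Finset.range (M+1), q j * p ^ j :=
        Finset.single_le_sum (f := fun j => q j * p ^ j)
          (fun j _ => mul_nonneg (hq j) (pow_nonneg hp0 j)) h0mem
  -- a point where Q is negative
  have hc : 0 < (1-p) * S₁ + p := by nlinarith
  obtain ⟨u, hu1, hupu, huc⟩ : ∃ u : ℝ, 1 < u ∧ p * u < 1 ∧ 1 < u * ((1-p) * S₁ + p) := by
    rcases eq_or_lt_of_le hp0 with h0 | h0
    · refine ⟨1 + ((1-p) * S₁ + p)⁻¹, ?_, ?_, ?_⟩
      · have : 0 < ((1-p) * S₁ + p)⁻¹ := by positivity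
        linarith
      · rw [← h0]; norm_num
      · have hinv : ((1-p) * S₁ + p)⁻¹ * ((1-p) * S₁ + p) = 1 := inv_mul_cancel₀ hc.ne'
        nlinarith
    · set c := (1-p) * S₁ + p with hcdef
      have hcp : p < c := by nlinarith
      have h1c : c⁻¹ < p⁻¹ := by
        apply inv_strictAnti₀ h0 hcp
      have h1p : 1 < p⁻¹ := by
        nlinarith [mul_inv_cancel₀ h0.ne']
      refine ⟨(max 1 c⁻¹ + p⁻¹) / 2, ?_, ?_, ?_⟩
      · have := le_max_left (1:ℝ) c⁻¹; linarith
      · have hu : (max 1 c⁻¹ + p⁻¹) / 2 < p⁻¹ := by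
          have := max_lt h1p h1c; linarith
        calc p * ((max 1 c⁻¹ + p⁻¹) / 2) < p * p⁻¹ := by
              apply mul_lt_mul_of_pos_left hu h0
          _ = 1 := mul_inv_cancel₀ h0.ne'
      · have hcinv : c⁻¹ * c = 1 := inv_mul_cancel₀ hc.ne'
        have h1 : c⁻¹ < (max 1 c⁻¹ + p⁻¹) / 2 := by
          have := le_max_right (1:ℝ) c⁻¹; linarith
        have hcinvpos : 0 < c⁻¹ := by positivity
        nlinarith
  have hupos : 0 < u := by linarith
  set ξ₂ := Real.log u with hξ₂def
  have hexp : Real.exp ξ₂ = u := Real.exp_log hupos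
  have hξ₂pos : 0 < ξ₂ := Real.log_pos hu1
  have hpu2 : p * Real.exp ξ₂ < 1 := by rw [hexp]; exact hupu
  have hQξ₂ : Qfun a b p₁ p₂ q ξ₂ p < 0 := by
    rw [hQrw ξ₂, hexp]
    have hd : 0 < 1 - p * u := by linarith
    have htpos : 0 ≤ p * u := mul_nonneg hp0 hupos.le
    have hBnn : 0 ≤ u * ∑ j ∈ Finset.range (a+1), p₂ j * (p * u) ^ j :=
      mul_nonneg hupos.le
        (Finset.sum_nonneg fun j _ => mul_nonneg (hp₂ j) (pow_nonneg htpos j))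
    have hCnn : 0 ≤ (1-p) * u * ∑ j ∈ Finset.range (M+1),
        (q j + p₂ j) * ∑ i ∈ Finset.range j, (p * u) ^ i :=
      mul_nonneg (mul_nonneg hp1'.le hupos.le)
        (Finset.sum_nonneg fun j _ => mul_nonneg (add_nonneg (hq j) (hp₂ j))
          (Finset.sum_nonneg fun i _ => pow_nonneg htpos i))
    have hA1 : 1 < (1-p) * u / (1 - p * u) * S₁ := by
      rw [div_mul_eq_mul_div, lt_div_iff₀ hd]
      nlinarith
    linarith
  -- continuity on [0, ξ₂]
  have hcont : ContinuousOn (fun ξ => Qfun a b p₁ p₂ q ξ p) (Set.Icc 0 ξ₂) := by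
    have heq : (fun ξ => Qfun a b p₁ p₂ q ξ p)
        = fun ξ => 1 - (1 - p) * Real.exp ξ / (1 - p * Real.exp ξ) * S₁
          - Real.exp ξ * ∑ j ∈ Finset.range (a + 1), p₂ j * (p * Real.exp ξ) ^ j
          - (1 - p) * Real.exp ξ * ∑ j ∈ Finset.range (M + 1),
              (q j + p₂ j) * ∑ i ∈ Finset.range j, (p * Real.exp ξ) ^ i :=
      funext hQrw
    rw [heq]
    have hne : ∀ x ∈ Set.Icc (0:ℝ) ξ₂, 1 - p * Real.exp x ≠ 0 := by
      intro x hx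
      have h1 : Real.exp x ≤ Real.exp ξ₂ := Real.exp_le_exp.2 hx.2
      have h2 : p * Real.exp x ≤ p * Real.exp ξ₂ := by nlinarith [Real.exp_pos x]
      have : p * Real.exp x < 1 := lt_of_le_of_lt h2 hpu2
      intro h; linarith [this]
    apply ContinuousOn.sub
    apply ContinuousOn.sub
    apply ContinuousOn.sub continuousOn_const
    · exact (((continuousOn_const.mul Real.continuous_exp.continuousOn).div
        (continuousOn_const.sub (continuousOn_const.mul Real.continuous_exp.continuousOn))
        hne).mul continuousOn_const)
    · exact (Real.continuous_exp.mul (continuous_finset_sum _ fun j _ =>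
        continuous_const.mul ((continuous_const.mul Real.continuous_exp).pow j))).continuousOn
    · exact ((continuous_const.mul Real.continuous_exp).mul
        (continuous_finset_sum _ fun j _ => continuous_const.mul
          (continuous_finset_sum _ fun i _ =>
            (continuous_const.mul Real.continuous_exp).pow i))).continuousOn
  -- IVT
  obtain ⟨ξ₀, hξ₀mem, hξ₀eq⟩ :=
    intermediate_value_Ioo' hξ₂pos.le hcont (Set.mem_Ioo.2 ⟨hQξ₂, hQ0pos⟩)
  have hpξ₀ : p * Real.exp ξ₀ < 1 := by
    have h1 : Real.exp ξ₀ < Real.exp ξ₂ := Real.exp_lt_exp.2 hξ₀mem.2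
    nlinarith [Real.exp_pos ξ₀]
  have hξ₀eq' : Qfun a b p₁ p₂ q ξ₀ p = 0 := hξ₀eq
  refine ⟨ξ₀, ⟨hξ₀mem.1, hpξ₀, hξ₀eq'⟩, ?_⟩
  rintro y ⟨hy0, hy1, hyQ⟩
  by_contra hne
  rcases lt_or_gt_of_ne hne with h | h
  · have := hmono y ξ₀ h hpξ₀
    rw [hξ₀eq', hyQ] at this
    exact lt_irrefl _ this
  · have := hmono ξ₀ y h hy1
    rw [hξ₀eq', hyQ] at this
    exact lt_irrefl _ this
end

section
/- Assume additionally that q(0) < 1. Then for every p ∈ [0,1), the function ξ ↦ Q(ξ,p) is strictly decreasing on the set {ξ : 0 ≤ ξ and p·e^ξ < 1}; that is, if 0 ≤ ξ < ξ′ and p·e^{ξ′} < 1, then Q(ξ′,p) < Q(ξ,p). -/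
open Finset

/-- If `q(0) < 1`, then for every `p ∈ [0,1)` the map `ξ ↦ Q(ξ,p)` is strictly decreasing
on `{ξ : 0 ≤ ξ ∧ p·e^ξ < 1}`. -/
theorem stmt_4 (a b : ℕ) (p₁ p₂ q : ℕ → ℝ)
    (hp₁ : ∀ j, 0 ≤ p₁ j) (hp₂ : ∀ j, 0 ≤ p₂ j) (hq : ∀ j, 0 ≤ q j)
    (hp₁a : ∀ j, a < j → p₁ j = 0) (hp₂a : ∀ j, a < j → p₂ j = 0)
    (hqb : ∀ j, b < j → q j = 0) (hq0 : 0 < q 0)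
    (hsum : ∑ j ∈ Finset.range (a + 1), p₁ j + ∑ j ∈ Finset.range (a + 1), p₂ j
      + ∑ j ∈ Finset.range (b + 1), q j = 1)
    (hq0' : q 0 < 1) :
    ∀ p ∈ Set.Ico (0 : ℝ) 1, ∀ ξ ξ' : ℝ, 0 ≤ ξ → ξ < ξ' → p * Real.exp ξ' < 1 →
      Qfun a b p₁ p₂ q ξ' p < Qfun a b p₁ p₂ q ξ p := by
  rintro p ⟨hp0, hp1⟩ ξ ξ' hξ0 hlt hpe'
  have hE : Real.exp ξ < Real.exp ξ' := Real.exp_lt_exp.mpr hlt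
  have hEpos := Real.exp_pos ξ
  have hE'pos := Real.exp_pos ξ'
  have hpe : p * Real.exp ξ < 1 :=
    lt_of_le_of_lt (mul_le_mul_of_nonneg_left hE.le hp0) hpe'
  have hden : 0 < 1 - p * Real.exp ξ := by linarith
  have hden' : 0 < 1 - p * Real.exp ξ' := by linarith
  have h1p : 0 < 1 - p := by linarith
  -- termwise bound
  have hterm : ∀ i : ℕ, p ^ i * Real.exp (i * ξ) ≤ p ^ i * Real.exp (i * ξ') := by
    intro i
    exact mul_le_mul_of_nonneg_left
      (Real.exp_le_exp.mpr (mul_le_mul_of_nonneg_left hlt.le (Nat.cast_nonneg i)))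
      (pow_nonneg hp0 i)
  have htermpos : ∀ i : ℕ, 0 ≤ p ^ i * Real.exp (i * ξ) := fun i =>
    mul_nonneg (pow_nonneg hp0 i) (Real.exp_pos _).le
  -- abbreviations
  set P1 := ∑ j ∈ Finset.range (a + 1), p₁ j with hP1
  have hP1nn : 0 ≤ P1 := Finset.sum_nonneg fun j _ => hp₁ j
  -- weak A
  have hratio : (1 - p) * Real.exp ξ / (1 - p * Real.exp ξ) ≤
      (1 - p) * Real.exp ξ' / (1 - p * Real.exp ξ') := by
    rw [div_le_div_iff₀ hden hden']
    nlinarith [mul_nonneg h1p.le (mul_nonneg hp0 (sub_pos.mpr hE).le)]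
  have hA : (1 - p) * Real.exp ξ / (1 - p * Real.exp ξ) * P1 ≤
      (1 - p) * Real.exp ξ' / (1 - p * Real.exp ξ') * P1 :=
    mul_le_mul_of_nonneg_right hratio hP1nn
  -- weak B
  have hSB : (∑ j ∈ Finset.range (a + 1), p₂ j * p ^ j * Real.exp (j * ξ)) ≤
      ∑ j ∈ Finset.range (a + 1), p₂ j * p ^ j * Real.exp (j * ξ') := by
    refine Finset.sum_le_sum fun j _ => ?_
    have := hterm j
    nlinarith [hp₂ j, pow_nonneg hp0 j, (Real.exp_pos ((j : ℝ) * ξ)).le]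
  have hSBnn : 0 ≤ ∑ j ∈ Finset.range (a + 1), p₂ j * p ^ j * Real.exp (j * ξ) :=
    Finset.sum_nonneg fun j _ => mul_nonneg (mul_nonneg (hp₂ j) (pow_nonneg hp0 j))
      (Real.exp_pos _).le
  have hB : Real.exp ξ * (∑ j ∈ Finset.range (a + 1), p₂ j * p ^ j * Real.exp (j * ξ)) ≤
      Real.exp ξ' * ∑ j ∈ Finset.range (a + 1), p₂ j * p ^ j * Real.exp (j * ξ') :=
    mul_le_mul hE.le hSB hSBnn hE'pos.le
  -- weak C
  have hSCj : ∀ j : ℕ, (∑ i ∈ Finset.range j, p ^ i * Real.exp (i * ξ)) ≤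
      ∑ i ∈ Finset.range j, p ^ i * Real.exp (i * ξ') := fun j =>
    Finset.sum_le_sum fun i _ => hterm i
  have hSCjnn : ∀ j : ℕ, 0 ≤ ∑ i ∈ Finset.range j, p ^ i * Real.exp (i * ξ) := fun j =>
    Finset.sum_nonneg fun i _ => htermpos i
  have hcoeff : ∀ j : ℕ, 0 ≤ q j + p₂ j := fun j => add_nonneg (hq j) (hp₂ j)
  have hSC : (∑ j ∈ Finset.range (max a b + 1),
        (q j + p₂ j) * ∑ i ∈ Finset.range j, p ^ i * Real.exp (i * ξ)) ≤
      ∑ j ∈ Finset.range (max a b + 1),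
        (q j + p₂ j) * ∑ i ∈ Finset.range j, p ^ i * Real.exp (i * ξ') :=
    Finset.sum_le_sum fun j _ => mul_le_mul_of_nonneg_left (hSCj j) (hcoeff j)
  have hSCnn : 0 ≤ ∑ j ∈ Finset.range (max a b + 1),
      (q j + p₂ j) * ∑ i ∈ Finset.range j, p ^ i * Real.exp (i * ξ) :=
    Finset.sum_nonneg fun j _ => mul_nonneg (hcoeff j) (hSCjnn j)
  have hC : (1 - p) * Real.exp ξ * (∑ j ∈ Finset.range (max a b + 1),
        (q j + p₂ j) * ∑ i ∈ Finset.range j, p ^ i * Real.exp (i * ξ)) ≤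
      (1 - p) * Real.exp ξ' * ∑ j ∈ Finset.range (max a b + 1),
        (q j + p₂ j) * ∑ i ∈ Finset.range j, p ^ i * Real.exp (i * ξ') := by
    rw [mul_assoc, mul_assoc]
    exact mul_le_mul_of_nonneg_left (mul_le_mul hE.le hSC hSCnn hE'pos.le) h1p.le
  -- strict C helper
  have hCstrict : (∃ j0, j0 ≠ 0 ∧ j0 ≤ max a b ∧ 0 < q j0 + p₂ j0) →
      (1 - p) * Real.exp ξ * (∑ j ∈ Finset.range (max a b + 1),
        (q j + p₂ j) * ∑ i ∈ Finset.range j, p ^ i * Real.exp (i * ξ)) <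
      (1 - p) * Real.exp ξ' * ∑ j ∈ Finset.range (max a b + 1),
        (q j + p₂ j) * ∑ i ∈ Finset.range j, p ^ i * Real.exp (i * ξ') := by
    rintro ⟨j0, hj0ne, hj0le, hj0pos⟩
    have hone : (1 : ℝ) ≤ ∑ i ∈ Finset.range j0, p ^ i * Real.exp (i * ξ) := by
      have h0mem : 0 ∈ Finset.range j0 := Finset.mem_range.mpr (Nat.pos_of_ne_zero hj0ne)
      have := Finset.single_le_sum (f := fun i : ℕ => p ^ i * Real.exp (i * ξ))
        (fun i _ => htermpos i) h0mem
      simpa using this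
    have hSCpos : 0 < ∑ j ∈ Finset.range (max a b + 1),
        (q j + p₂ j) * ∑ i ∈ Finset.range j, p ^ i * Real.exp (i * ξ) := by
      refine Finset.sum_pos' (fun j _ => mul_nonneg (hcoeff j) (hSCjnn j)) ?_
      exact ⟨j0, Finset.mem_range.mpr (Nat.lt_succ_of_le hj0le),
        mul_pos hj0pos (lt_of_lt_of_le one_pos hone)⟩
    rw [mul_assoc, mul_assoc]
    refine mul_lt_mul_of_pos_left ?_ h1p
    calc Real.exp ξ * _ < Real.exp ξ' * _ := mul_lt_mul_of_pos_right hE hSCpos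
      _ ≤ _ := mul_le_mul_of_nonneg_left hSC hE'pos.le
  -- strict B helper
  have hBstrict : (0 < ∑ j ∈ Finset.range (a + 1), p₂ j * p ^ j * Real.exp (j * ξ)) →
      Real.exp ξ * (∑ j ∈ Finset.range (a + 1), p₂ j * p ^ j * Real.exp (j * ξ)) <
      Real.exp ξ' * ∑ j ∈ Finset.range (a + 1), p₂ j * p ^ j * Real.exp (j * ξ') := by
    intro hpos
    calc Real.exp ξ * _ < Real.exp ξ' * _ := mul_lt_mul_of_pos_right hE hpos
      _ ≤ _ := mul_le_mul_of_nonneg_left hSB hE'pos.le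
  -- strict A helper
  have hAstrict : 0 < P1 →
      (1 - p) * Real.exp ξ / (1 - p * Real.exp ξ) * P1 <
      (1 - p) * Real.exp ξ' / (1 - p * Real.exp ξ') * P1 := by
    intro hpos
    refine mul_lt_mul_of_pos_right ?_ hpos
    rw [div_lt_div_iff₀ hden hden']
    nlinarith [mul_pos h1p (sub_pos.mpr hE), mul_nonneg hp0 (mul_pos hEpos hE'pos).le]
  -- case analysis
  simp only [Qfun]
  rcases lt_or_eq_of_le hP1nn with hP1pos | hP1z
  · have := hAstrict hP1pos
    linarith
  · set P2 := ∑ j ∈ Finset.range (a + 1), p₂ j with hP2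
    have hP2nn : 0 ≤ P2 := Finset.sum_nonneg fun j _ => hp₂ j
    rcases lt_or_eq_of_le hP2nn with hP2pos | hP2z
    · -- some p₂ j0 > 0
      obtain ⟨j0, hj0mem, hj0pos⟩ := Finset.exists_lt_of_sum_lt
        (f := fun _ : ℕ => (0 : ℝ)) (g := p₂) (by simpa using hP2pos)
      by_cases hj0 : j0 = 0
      · -- B strict
        have hpos : 0 < ∑ j ∈ Finset.range (a + 1), p₂ j * p ^ j * Real.exp (j * ξ) := by
          refine Finset.sum_pos' (fun j _ => mul_nonneg (mul_nonneg (hp₂ j)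
            (pow_nonneg hp0 j)) (Real.exp_pos _).le) ⟨j0, hj0mem, ?_⟩
          subst hj0
          simpa using hj0pos
        have := hBstrict hpos
        linarith
      · -- C strict
        have hj0le : j0 ≤ max a b :=
          le_trans (Nat.lt_succ_iff.mp (Finset.mem_range.mp hj0mem)) (le_max_left a b)
        have := hCstrict ⟨j0, hj0, hj0le, lt_of_lt_of_le hj0pos (le_add_of_nonneg_left (hq j0))⟩
        linarith
    · -- q part: some q j0 > 0 with j0 ≠ 0
      have hQsum : ∑ j ∈ Finset.range (b + 1), q j = 1 := by linarith
      have h0mem : 0 ∈ Finset.range (b + 1) := Finset.mem_range.mpr (Nat.succ_pos b)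
      have herase : q 0 + ∑ j ∈ (Finset.range (b + 1)).erase 0, q j
          = ∑ j ∈ Finset.range (b + 1), q j := Finset.add_sum_erase _ q h0mem
      have htail : 0 < ∑ j ∈ (Finset.range (b + 1)).erase 0, q j := by
        rw [hQsum] at herase; linarith
      obtain ⟨j0, hj0mem, hj0pos⟩ := Finset.exists_lt_of_sum_lt
        (f := fun _ : ℕ => (0 : ℝ)) (g := q) (by simpa only [Finset.sum_const_zero] using htail)
      obtain ⟨hj0ne, hj0mem'⟩ := Finset.mem_erase.mp hj0mem
      have hj0le : j0 ≤ max a b :=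
        le_trans (Nat.lt_succ_iff.mp (Finset.mem_range.mp hj0mem')) (le_max_right a b)
      have := hCstrict ⟨j0, hj0ne, hj0le, lt_of_lt_of_le hj0pos (le_add_of_nonneg_right (hp₂ j0))⟩
      linarith
end

section
/- For every p ∈ [0,1) there is exactly one ξ ∈ ℝ with 0 < ξ, p·e^ξ < 1, and Q̃₂(ξ,p) = 0. -/
open Finset

/-- `Q̃₂(ξ,p) = 1 − e^ξ + (1−p)·e^ξ·∑_{j=0}^b q(j)·p^j·e^{jξ}`, the numerator of the
critical-exponent equation for the algorithm class `𝒜₂`. -/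
noncomputable def Qt2 (b : ℕ) (q : ℕ → ℝ) (ξ p : ℝ) : ℝ :=
  1 - Real.exp ξ + (1 - p) * Real.exp ξ *
    ∑ j ∈ Finset.range (b + 1), q j * p ^ j * Real.exp (j * ξ)

/-! With `x = e^ξ` the equation `Q̃₂(ξ,p) = 0` becomes `P(x) = 0` for a polynomial `P` that is
convex on `[0, ∞)`, with `P(1) = (1-p)·∑ q(j) pʲ > 0` and `P(1/p) = (1/p - 1)(∑ q(j) - 1) < 0`.
The intermediate value theorem gives a root in `(1, 1/p)`, and it is unique because a convex
function cannot take the same value twice to the left of a point where it is smaller. For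
`p = 0` the polynomial is `1 - (1 - q(0)) x` and the root is explicit. -/

open Set Real

section Convex

variable {𝕜 E β ι : Type*} [Semiring 𝕜] [PartialOrder 𝕜] [AddCommMonoid E] [AddCommMonoid β]
  [PartialOrder β] [IsOrderedAddMonoid β] [SMul 𝕜 E] [DistribMulAction 𝕜 β]

theorem ConvexOn.sum {s : Set E} {t : Finset ι} {f : ι → E → β} (hs : Convex 𝕜 s)
    (hf : ∀ i ∈ t, ConvexOn 𝕜 s (f i)) : ConvexOn 𝕜 s fun x => ∑ i ∈ t, f i x :=
  ⟨hs, fun _ hx _ hy _ _ ha hb hab => by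
    simpa only [Finset.smul_sum, ← Finset.sum_add_distrib] using
      Finset.sum_le_sum fun i hi => (hf i hi).2 hx hy ha hb hab⟩

end Convex

theorem ConvexOn.eq_of_map_eq_of_map_lt {s : Set ℝ} {f : ℝ → ℝ} {c x y : ℝ}
    (hf : ConvexOn ℝ s f) (hc : c ∈ s) (hx : x ∈ s) (hy : y ∈ s) (hxc : x < c) (hyc : y < c)
    (hfxy : f x = f y) (hfc : f c < f x) : x = y := by
  have key : ∀ {u v : ℝ}, u ∈ s → u < v → v < c → f c < f v → f v < f u :=
    fun hu huv hvc h => hf.lt_left_of_right_lt hu hc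
      (by rw [openSegment_eq_Ioo (huv.trans hvc)]; exact ⟨huv, hvc⟩) h
  rcases lt_trichotomy x y with h | h | h
  · exact ((key hx h hyc (hfxy ▸ hfc)).ne hfxy.symm).elim
  · exact h
  · exact ((key hy h hxc hfc).ne hfxy).elim

theorem ConvexOn.existsUnique_zero_Ioo {f : ℝ → ℝ} {a c : ℝ} (hac : a ≤ c)
    (hf : ConvexOn ℝ (Icc a c) f) (hcont : ContinuousOn f (Icc a c)) (hfa : 0 < f a)
    (hfc : f c < 0) : ∃! x ∈ Ioo a c, f x = 0 := by
  obtain ⟨x, hx, hfx⟩ := intermediate_value_Ioo' hac hcont ⟨hfc, hfa⟩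
  refine ⟨x, ⟨hx, hfx⟩, fun y ⟨hy, hfy⟩ => ?_⟩
  exact hf.eq_of_map_eq_of_map_lt (right_mem_Icc.2 hac) (Ioo_subset_Icc_self hy)
    (Ioo_subset_Icc_self hx) hy.2 hx.2 (hfy.trans hfx.symm) (hfy ▸ hfc)

theorem Real.existsUnique_exp_iff {P : ℝ → Prop} (hP : ∀ x, P x → 0 < x) :
    (∃! ξ, P (exp ξ)) ↔ ∃! x, P x := by
  constructor
  · rintro ⟨ξ, hξ, huniq⟩
    refine ⟨exp ξ, hξ, fun x hx => ?_⟩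
    rw [← exp_log (hP x hx), huniq (log x) (by beta_reduce; rwa [exp_log (hP x hx)])]
  · rintro ⟨x, hx, huniq⟩
    refine ⟨log x, by beta_reduce; rwa [exp_log (hP x hx)], fun ξ hξ => ?_⟩
    rw [← huniq _ hξ, log_exp]

noncomputable def Qt2Poly (b : ℕ) (q : ℕ → ℝ) (p x : ℝ) : ℝ :=
  1 - x + (1 - p) * ∑ j ∈ range (b + 1), q j * p ^ j * x ^ (j + 1)

section Qt2Poly

variable {b : ℕ} {q : ℕ → ℝ} {p : ℝ}

theorem Qt2_eq_Qt2Poly_exp (ξ : ℝ) : Qt2 b q ξ p = Qt2Poly b q p (exp ξ) := by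
  rw [Qt2, Qt2Poly, mul_assoc, mul_sum]
  congr 2
  refine sum_congr rfl fun j _ => ?_
  rw [exp_nat_mul, pow_succ]
  ring

theorem continuous_Qt2Poly : Continuous (Qt2Poly b q p) := by
  unfold Qt2Poly
  fun_prop

theorem convexOn_Qt2Poly (hq : ∀ j, 0 ≤ q j) (hp0 : 0 ≤ p) (hp1 : p ≤ 1) :
    ConvexOn ℝ (Ici 0) (Qt2Poly b q p) := by
  have hlin : ConvexOn ℝ (Ici (0 : ℝ)) fun x => 1 - x :=
    (convexOn_const 1 (convex_Ici 0)).sub (concaveOn_id (convex_Ici 0))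
  have hsum : ConvexOn ℝ (Ici (0 : ℝ)) fun x => ∑ j ∈ range (b + 1), q j * p ^ j * x ^ (j + 1) :=
    ConvexOn.sum (convex_Ici 0) fun j _ =>
      (convexOn_pow (j + 1)).smul (mul_nonneg (hq j) (pow_nonneg hp0 j))
  exact hlin.add (hsum.smul (sub_nonneg.2 hp1))

theorem Qt2Poly_one_pos (hq : ∀ j, 0 ≤ q j) (hq0 : 0 < q 0) (hp0 : 0 ≤ p) (hp1 : p < 1) :
    0 < Qt2Poly b q p 1 := by
  simp only [Qt2Poly, one_pow, mul_one, sub_self, zero_add]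
  refine mul_pos (sub_pos.2 hp1) (sum_pos' (fun j _ => mul_nonneg (hq j) (pow_nonneg hp0 j)) ?_)
  exact ⟨0, mem_range.2 b.succ_pos, by simpa using hq0⟩

theorem Qt2Poly_inv (hp : p ≠ 0) :
    Qt2Poly b q p p⁻¹ = (p⁻¹ - 1) * (∑ j ∈ range (b + 1), q j - 1) := by
  have hterm : ∀ j : ℕ, p ^ j * p⁻¹ ^ (j + 1) = p⁻¹ := fun j => by
    rw [pow_succ, ← mul_assoc, ← mul_pow, mul_inv_cancel₀ hp, one_pow, one_mul]
  simp only [Qt2Poly, mul_assoc, hterm, ← sum_mul]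
  field_simp
  ring

theorem Qt2Poly_zero_left (x : ℝ) : Qt2Poly b q 0 x = 1 - (1 - q 0) * x := by
  rw [Qt2Poly, sum_eq_single_of_mem 0 (mem_range.2 b.succ_pos) fun j _ hj => by simp [hj]]
  ring

theorem existsUnique_Qt2Poly_root (hq : ∀ j, 0 ≤ q j) (hq0 : 0 < q 0)
    (hqsum : ∑ j ∈ range (b + 1), q j < 1) (hp0 : 0 ≤ p) (hp1 : p < 1) :
    ∃! x, 1 < x ∧ p * x < 1 ∧ Qt2Poly b q p x = 0 := by
  rcases hp0.eq_or_lt with rfl | hp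
  · have hq01 : 0 < 1 - q 0 := sub_pos.2 <|
      (single_le_sum (fun j _ => hq j) (mem_range.2 b.succ_pos)).trans_lt hqsum
    refine ⟨(1 - q 0)⁻¹, ⟨?_, by simp, ?_⟩, fun x ⟨_, _, hx⟩ => ?_⟩
    · exact one_lt_inv₀ hq01 |>.2 (by linarith)
    · rw [Qt2Poly_zero_left, mul_inv_cancel₀ hq01.ne', sub_self]
    · rw [Qt2Poly_zero_left] at hx
      field_simp
      linarith
  · have hconv : ConvexOn ℝ (Icc 1 p⁻¹) (Qt2Poly b q p) :=
      (convexOn_Qt2Poly hq hp0 hp1.le).subset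
        (Icc_subset_Ici_self.trans (Ici_subset_Ici.2 zero_le_one)) (convex_Icc 1 p⁻¹)
    have hroot := hconv.existsUnique_zero_Ioo (one_le_inv₀ hp |>.2 hp1.le)
        continuous_Qt2Poly.continuousOn (Qt2Poly_one_pos hq hq0 hp0 hp1) ?_
    · refine (existsUnique_congr fun x => ?_).1 hroot
      rw [Set.mem_Ioo, ← lt_inv_mul_iff₀ hp, mul_one, and_assoc]
    · rw [Qt2Poly_inv hp.ne']
      exact mul_neg_of_pos_of_neg (sub_pos.2 (one_lt_inv₀ hp |>.2 hp1)) (sub_neg.2 hqsum)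

end Qt2Poly

theorem stmt_5_general (b : ℕ) (q : ℕ → ℝ)
    (hq : ∀ j, 0 ≤ q j) (hq0 : 0 < q 0)
    (hqsum : ∑ j ∈ Finset.range (b + 1), q j < 1) :
    ∀ p ∈ Set.Ico (0 : ℝ) 1,
      ∃! ξ : ℝ, 0 < ξ ∧ p * Real.exp ξ < 1 ∧ Qt2 b q ξ p = 0 := by
  intro p ⟨hp0, hp1⟩
  simp only [Qt2_eq_Qt2Poly_exp, ← one_lt_exp_iff]
  exact (existsUnique_exp_iff fun x hx => one_pos.trans hx.1).2
    (existsUnique_Qt2Poly_root hq hq0 hqsum hp0 hp1)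

/-- For every `p ∈ [0,1)` there is exactly one `ξ` with `0 < ξ`, `p·e^ξ < 1`
and `Q̃₂(ξ,p) = 0`. -/
theorem stmt_5 (b : ℕ) (q : ℕ → ℝ)
    (hq : ∀ j, 0 ≤ q j) (hqb : ∀ j, b < j → q j = 0) (hq0 : 0 < q 0)
    (hqsum : ∑ j ∈ Finset.range (b + 1), q j < 1) :
    ∀ p ∈ Set.Ico (0 : ℝ) 1,
      ∃! ξ : ℝ, 0 < ξ ∧ p * Real.exp ξ < 1 ∧ Qt2 b q ξ p = 0 :=
  stmt_5_general b q hq hq0 hqsum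
end

section
/- For every p ∈ [0,1) and every ξ ∈ ℝ with 0 ≤ ξ and p·e^ξ < 1, one has Q̃₂(ξ,p) > 0 if and only if ξ < ξ₂(p). -/
open Finset

/-!
`ξ ↦ Q̃₂(ξ,p)` is continuous, positive at `0`, and negative somewhere beyond any point of the
domain `p·e^ξ < 1`: there `∑ q(j)(p e^ξ)^j ≤ ∑ q(j) < 1`, so `Q̃₂(ξ,p) ≤ 1 − (1 − (1−p)∑ q(j))·e^ξ`,
and the coefficient of `e^ξ` exceeds `p`. By the intermediate value theorem, a function with
these properties and a unique positive zero in the domain changes sign exactly at that zero.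
-/

theorem pos_iff_lt_of_unique_zero {f : ℝ → ℝ} {s : Set ℝ} (hs : s.OrdConnected)
    (hf : ContinuousOn f s) {a z : ℝ} (ha : a ∈ s) (hfa : 0 < f a)
    (hfz : f z = 0) (huniq : ∀ x, a < x → x ∈ s → f x = 0 → x = z)
    (hneg : ∀ x ∈ s, ∃ y ∈ s, x < y ∧ f y < 0) {x : ℝ} (hx : x ∈ s) (hax : a ≤ x) :
    0 < f x ↔ x < z := by
  have zero_between : ∀ {u v}, u ∈ s → v ∈ s → u ≤ v → f v < 0 → 0 < f u →
      ∃ w ∈ Set.Ioo u v, w ∈ s ∧ f w = 0 := fun hu hv huv hfv hfu => by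
    obtain ⟨w, hw, hfw⟩ := intermediate_value_Ioo' huv (hf.mono (hs.out hu hv)) ⟨hfv, hfu⟩
    exact ⟨w, hw, hs.out hu hv (Set.Ioo_subset_Icc_self hw), hfw⟩
  constructor
  · intro hfx
    by_contra! hzx
    have hzx : z < x := hzx.lt_of_ne (by rintro rfl; linarith)
    obtain ⟨y, hy, hxy, hfy⟩ := hneg x hx
    obtain ⟨w, hw, hws, hfw⟩ := zero_between hx hy hxy.le hfy hfx
    have hwz : w = z := huniq w (by linarith [hw.1]) hws hfw
    linarith [hw.1]
  · intro hxz
    rcases hax.eq_or_lt with rfl | hax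
    · exact hfa
    by_contra! hfx
    rcases hfx.lt_or_eq with hfx | hfx
    · obtain ⟨w, hw, hws, hfw⟩ := zero_between ha hx hax.le hfx hfa
      have hwz : w = z := huniq w hw.1 hws hfw
      linarith [hw.2]
    · linarith [huniq x hax hx hfx]

variable {b : ℕ} {q : ℕ → ℝ} {p : ℝ}

theorem continuous_Qt2 : Continuous fun ξ => Qt2 b q ξ p := by
  unfold Qt2
  fun_prop

theorem Qt2_zero_pos (hq : ∀ j, 0 ≤ q j) (hq0 : 0 < q 0) (hp0 : 0 ≤ p) (hp1 : p < 1) :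
    0 < Qt2 b q 0 p := by
  have hsum : q 0 ≤ ∑ j ∈ range (b + 1), q j * p ^ j := by
    simpa using single_le_sum (f := fun j => q j * p ^ j)
      (fun j _ => mul_nonneg (hq j) (pow_nonneg hp0 j)) (mem_range.mpr b.succ_pos)
  simp only [Qt2, mul_zero, Real.exp_zero, mul_one, sub_self, zero_add]
  exact mul_pos (by linarith) (hq0.trans_le hsum)

theorem Qt2_le (hq : ∀ j, 0 ≤ q j) (hp0 : 0 ≤ p) (hp1 : p ≤ 1) {ξ : ℝ}
    (hpξ : p * Real.exp ξ ≤ 1) :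
    Qt2 b q ξ p ≤ 1 - (1 - (1 - p) * ∑ j ∈ range (b + 1), q j) * Real.exp ξ := by
  have hterm : ∀ j, q j * p ^ j * Real.exp (j * ξ) ≤ q j := fun j => by
    rw [mul_assoc, Real.exp_nat_mul, ← mul_pow]
    exact mul_le_of_le_one_right (hq j) (pow_le_one₀ (by positivity) hpξ)
  have hsum := sum_le_sum fun j (_ : j ∈ range (b + 1)) => hterm j
  have hcoef : 0 ≤ (1 - p) * Real.exp ξ := mul_nonneg (by linarith) (Real.exp_pos ξ).le
  unfold Qt2
  linarith [mul_le_mul_of_nonneg_left hsum hcoef]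

theorem exists_gt_Qt2_neg (hq : ∀ j, 0 ≤ q j) (hqsum : ∑ j ∈ range (b + 1), q j < 1)
    (hp0 : 0 ≤ p) (hp1 : p < 1) {ξ : ℝ} (hpξ : p * Real.exp ξ < 1) :
    ∃ ξ', p * Real.exp ξ' < 1 ∧ ξ < ξ' ∧ Qt2 b q ξ' p < 0 := by
  set c := 1 - (1 - p) * ∑ j ∈ range (b + 1), q j
  have hpc : p < c := by nlinarith
  have hpξ' : p < Real.exp (-ξ) := by
    rwa [Real.exp_neg, inv_eq_one_div, lt_div_iff₀ (Real.exp_pos ξ)]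
  obtain ⟨v, hpv, hv⟩ := exists_between (lt_min hpc hpξ')
  have hv0 : 0 < v := hp0.trans_lt hpv
  have hexp : Real.exp (-Real.log v) = v⁻¹ := by rw [Real.exp_neg, Real.exp_log hv0]
  have hdom : p * Real.exp (-Real.log v) < 1 := by
    rw [hexp, mul_inv_lt_iff₀ hv0]
    linarith
  refine ⟨-Real.log v, hdom, ?_, ?_⟩
  · rw [lt_neg, Real.log_lt_iff_lt_exp hv0]
    exact (lt_min_iff.mp hv).2
  · calc Qt2 b q (-Real.log v) p ≤ 1 - c * v⁻¹ := hexp ▸ Qt2_le hq hp0 hp1.le hdom.le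
      _ < 0 := by
        rw [sub_neg, lt_mul_inv_iff₀ hv0, one_mul]
        exact (lt_min_iff.mp hv).1

theorem stmt_7_general (b : ℕ) (q : ℕ → ℝ)
    (hq : ∀ j, 0 ≤ q j) (hq0 : 0 < q 0)
    (hqsum : ∑ j ∈ Finset.range (b + 1), q j < 1)
    (ξ₂ : ℝ → ℝ)
    (hξ₂ : ∀ p ∈ Set.Ico (0 : ℝ) 1,
      (0 < ξ₂ p ∧ p * Real.exp (ξ₂ p) < 1 ∧ Qt2 b q (ξ₂ p) p = 0) ∧
      ∀ ξ : ℝ, 0 < ξ → p * Real.exp ξ < 1 → Qt2 b q ξ p = 0 → ξ = ξ₂ p) :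
    ∀ p ∈ Set.Ico (0 : ℝ) 1, ∀ ξ : ℝ, 0 ≤ ξ → p * Real.exp ξ < 1 →
      (0 < Qt2 b q ξ p ↔ ξ < ξ₂ p) := by
  rintro p ⟨hp0, hp1⟩ ξ hξ hpξ
  obtain ⟨⟨-, -, hξ₂zero⟩, huniq⟩ := hξ₂ p ⟨hp0, hp1⟩
  have hdom : {ξ : ℝ | p * Real.exp ξ < 1}.OrdConnected :=
    IsLowerSet.ordConnected fun _ _ hle h =>
      (by gcongr : p * Real.exp _ ≤ p * Real.exp _).trans_lt h
  exact pos_iff_lt_of_unique_zero hdom continuous_Qt2.continuousOn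
    (by simpa using hp1) (Qt2_zero_pos hq hq0 hp0 hp1) hξ₂zero huniq
    (fun _ hx => exists_gt_Qt2_neg hq hqsum hp0 hp1 hx) hpξ hξ

/-- For `p ∈ [0,1)` and `ξ` with `0 ≤ ξ` and `p·e^ξ < 1`:
`Q̃₂(ξ,p) > 0` iff `ξ < ξ₂(p)`. -/
theorem stmt_7 (b : ℕ) (q : ℕ → ℝ)
    (hq : ∀ j, 0 ≤ q j) (hqb : ∀ j, b < j → q j = 0) (hq0 : 0 < q 0)
    (hqsum : ∑ j ∈ Finset.range (b + 1), q j < 1)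
    (ξ₂ : ℝ → ℝ)
    (hξ₂ : ∀ p ∈ Set.Ico (0 : ℝ) 1,
      (0 < ξ₂ p ∧ p * Real.exp (ξ₂ p) < 1 ∧ Qt2 b q (ξ₂ p) p = 0) ∧
      ∀ ξ : ℝ, 0 < ξ → p * Real.exp ξ < 1 → Qt2 b q ξ p = 0 → ξ = ξ₂ p) :
    ∀ p ∈ Set.Ico (0 : ℝ) 1, ∀ ξ : ℝ, 0 ≤ ξ → p * Real.exp ξ < 1 →
      (0 < Qt2 b q ξ p ↔ ξ < ξ₂ p) :=
  stmt_7_general b q hq hq0 hqsum ξ₂ hξ₂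
end

section
/- The map p ↦ Q̃₂(−log(1−q(0)), p) has right derivative at p = 0 (i.e. derivative within [0,1) at 0) equal to (q(1) − q(0)·(1−q(0))) / (1−q(0))². -/
open Finset

theorem sum_range_succ_mul_zero_pow {R : Type*} [Semiring R] (c : ℕ → R) (n : ℕ) :
    ∑ j ∈ range (n + 1), c j * 0 ^ j = c 0 := by
  simp [Finset.sum_range_succ']

theorem hasDerivAt_sum_range_mul_pow_zero {𝕜 : Type*} [NontriviallyNormedField 𝕜]
    (c : ℕ → 𝕜) (n : ℕ) (hc : ∀ j, n ≤ j → c j = 0) :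
    HasDerivAt (fun x : 𝕜 => ∑ j ∈ range n, c j * x ^ j) (c 1) 0 := by
  have hterms : HasDerivAt (fun x : 𝕜 => ∑ j ∈ range n, c j * x ^ j)
      (∑ j ∈ range n, c j * (j * 0 ^ (j - 1))) 0 :=
    HasDerivAt.fun_sum fun j _ => (hasDerivAt_pow j 0).const_mul (c j)
  refine hterms.congr_deriv ?_
  rw [Finset.sum_eq_single 1]
  · simp
  · rintro (_ | _ | j) _ hj <;> simp_all
  · intro h1
    simp [hc 1 (by simpa using h1)]

theorem hasDerivAt_Qt2_zero (b : ℕ) (q : ℕ → ℝ) (ξ : ℝ) (hqb : ∀ j, b < j → q j = 0) :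
    HasDerivAt (Qt2 b q ξ) (Real.exp ξ * (q 1 * Real.exp ξ - q 0)) 0 := by
  set c : ℕ → ℝ := fun j => q j * Real.exp (j * ξ)
  have hQt2 : Qt2 b q ξ = fun p => 1 - Real.exp ξ + (1 - p) * Real.exp ξ *
      ∑ j ∈ range (b + 1), c j * p ^ j := by
    ext p
    simp only [Qt2, c, mul_right_comm]
  have hsum := hasDerivAt_sum_range_mul_pow_zero c (b + 1) fun j hj => by
    simp [c, hqb j hj]
  have hfactor : HasDerivAt (fun p : ℝ => (1 - p) * Real.exp ξ) (-Real.exp ξ) 0 := by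
    simpa using ((hasDerivAt_id (0 : ℝ)).const_sub 1).mul_const (Real.exp ξ)
  rw [hQt2]
  refine ((hfactor.fun_mul hsum).const_add (1 - Real.exp ξ)).congr_deriv ?_
  simp only [sum_range_succ_mul_zero_pow, c, Nat.cast_zero, Nat.cast_one, zero_mul, one_mul,
    Real.exp_zero, mul_one, sub_zero]
  ring

theorem stmt_10_general (b : ℕ) (q : ℕ → ℝ)
    (hq : ∀ j, 0 ≤ q j) (hqb : ∀ j, b < j → q j = 0)
    (hqsum : ∑ j ∈ Finset.range (b + 1), q j < 1) :
    HasDerivWithinAt (fun p => Qt2 b q (-Real.log (1 - q 0)) p)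
      ((q 1 - q 0 * (1 - q 0)) / (1 - q 0) ^ 2) (Set.Ico (0 : ℝ) 1) 0 := by
  have hq0_lt : q 0 < 1 :=
    (single_le_sum (fun j _ => hq j) (mem_range.2 b.succ_pos)).trans_lt hqsum
  have hexp : Real.exp (-Real.log (1 - q 0)) = (1 - q 0)⁻¹ := by
    rw [Real.exp_neg, Real.exp_log (by linarith)]
  refine (hasDerivAt_Qt2_zero b q _ hqb).hasDerivWithinAt.congr_deriv ?_
  rw [hexp]
  field_simp [(by linarith : (1 - q 0) ≠ 0)]

/-- The map `p ↦ Q̃₂(−log(1−q(0)), p)` has right derivative at `p = 0` (derivative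
within `[0,1)`) equal to `(q(1) − q(0)·(1−q(0))) / (1−q(0))²`. -/
theorem stmt_10 (b : ℕ) (q : ℕ → ℝ)
    (hq : ∀ j, 0 ≤ q j) (hqb : ∀ j, b < j → q j = 0) (hq0 : 0 < q 0)
    (hqsum : ∑ j ∈ Finset.range (b + 1), q j < 1) :
    HasDerivWithinAt (fun p => Qt2 b q (-Real.log (1 - q 0)) p)
      ((q 1 - q 0 * (1 - q 0)) / (1 - q 0) ^ 2) (Set.Ico (0 : ℝ) 1) 0 :=
  stmt_10_general b q hq hqb hqsum
end

section
/- Assume q(1) > q(0)·(1 − q(0)). Then there exists p* ∈ (0,1) such that ξ₂(p*) ≥ ξ₂(p) for all p ∈ [0,1), and moreover p* satisfies the critical-point equation ∑_{j=0}^b q(j)·e^{(j+1)·ξ₂(p*)}·( j·(p*)^{j−1} − (j+1)·(p*)^j ) = 0. -/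
open Finset

/-!
For fixed `p`, `Q̃₂(·, p)` is positive at `ξ = 0` and negative somewhere below the pole
`p e^ξ = 1`, so by uniqueness of its zero it is positive before `ξ₂(p)` and negative after it.
This sign description makes `ξ₂` continuous on `[0, 1)`, and `ξ₂(p) ≤ ξ` as soon as
`Q̃₂(ξ, p) ≤ 0`. Since `p e^{ξ₂(p)} < 1`, `ξ₂(p) < ξ₂(0)` once `p > e^{-ξ₂(0)}`, while the hypothesis on `q(1)` makes `∂ₚQ̃₂(ξ₂(0), 0) > 0`, so `ξ₂` rises
just right of `0`. Hence `ξ₂` attains its maximum over `[0, 1)` at an interior `p*`. Near `p*`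
the function `Q̃₂(ξ₂(p*), ·)` is `≤ 0` with equality at `p*`, so its `p`-derivative, which is
the sum in the claim, vanishes there.
-/

open Set Filter Topology Real

theorem mul_exp_lt_one_of_le {p x y : ℝ} (hp : 0 ≤ p) (hxy : x ≤ y) (hy : p * exp y < 1) :
    p * exp x < 1 :=
  (mul_le_mul_of_nonneg_left (exp_le_exp.2 hxy) hp).trans_lt hy

theorem pos_of_lt_of_forall_eq_zero {f : ℝ → ℝ} {a x r : ℝ} (hf : ContinuousOn f (Icc a x))
    (hax : a ≤ x) (ha : 0 < f a) (huniq : ∀ y ∈ Ioc a x, f y = 0 → y = r) (hxr : x < r) :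
    0 < f x := by
  by_contra! hx
  obtain ⟨y, hy, hfy⟩ := intermediate_value_Icc' hax hf ⟨hx, ha.le⟩
  have hay : a < y := hy.1.lt_of_ne (by rintro rfl; exact ha.ne' hfy)
  exact (huniq y ⟨hay, hy.2⟩ hfy ▸ hy.2).not_gt hxr

theorem neg_of_gt_of_forall_eq_zero {f : ℝ → ℝ} {x c r : ℝ} (hf : ContinuousOn f (Icc x c))
    (hxc : x ≤ c) (hc : f c < 0) (huniq : ∀ y ∈ Ico x c, f y = 0 → y = r) (hrx : r < x) :
    f x < 0 := by
  by_contra! hx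
  obtain ⟨y, hy, hfy⟩ := intermediate_value_Icc' hxc hf ⟨hc.le, hx⟩
  have hyc : y < c := hy.2.lt_of_ne (by rintro rfl; exact hc.ne hfy)
  exact (huniq y ⟨hy.1, hyc⟩ hfy ▸ hy.1).not_gt hrx

theorem HasDerivAt.eventually_nhdsGT_lt {f : ℝ → ℝ} {f' x : ℝ} (hf : HasDerivAt f f' x)
    (hf' : 0 < f') : ∀ᶠ y in 𝓝[>] x, f x < f y := by
  filter_upwards [((hasDerivAt_iff_tendsto_slope.mp hf).mono_left (nhdsGT_le_nhdsNE x)).eventually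
    (eventually_gt_nhds hf'), self_mem_nhdsWithin] with y hslope hxy
  exact (slope_pos_iff hxy).1 hslope

theorem Filter.Eventually.exists_gt_of_nhds {P : ℝ → Prop} {x : ℝ} (h : ∀ᶠ y in 𝓝 x, P y) :
    ∃ y, x < y ∧ P y :=
  (Eventually.and (self_mem_nhdsWithin (s := Ioi x)) (h.filter_mono nhdsWithin_le_nhds)).exists

theorem exists_mem_Ioo_isMaxOn {f : ℝ → ℝ} {l a u : ℝ} (hf : ContinuousOn f (Icc l a))
    (hau : a < u) (htail : ∀ x ∈ Ioo a u, f x ≤ f l) (hgt : ∃ x ∈ Ioc l a, f l < f x) :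
    ∃ c ∈ Ioo l u, IsMaxOn f (Ico l u) c := by
  obtain ⟨x, hx, hfx⟩ := hgt
  obtain ⟨c, hc, hmax⟩ := isCompact_Icc.exists_isMaxOn (nonempty_Icc.2 (hx.1.le.trans hx.2)) hf
  have hlc : l < c := hc.1.lt_of_ne (by rintro rfl; exact (hmax ⟨hx.1.le, hx.2⟩).not_gt hfx)
  refine ⟨c, ⟨hlc, hc.2.trans_lt hau⟩, fun y hy => ?_⟩
  rcases le_or_gt y a with hya | hay
  · exact hmax ⟨hy.1, hya⟩
  · exact (htail y ⟨hay, hy.2⟩).trans (hmax ⟨le_rfl, hx.1.le.trans hx.2⟩)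

section

variable {b : ℕ} {q : ℕ → ℝ}

theorem continuous_Qt2_left (b : ℕ) (q : ℕ → ℝ) (p : ℝ) : Continuous fun ξ => Qt2 b q ξ p := by
  unfold Qt2; fun_prop

theorem continuous_Qt2_right (b : ℕ) (q : ℕ → ℝ) (ξ : ℝ) : Continuous fun p => Qt2 b q ξ p := by
  unfold Qt2; fun_prop

theorem Qt2_zero_left_pos (hq : ∀ j, 0 ≤ q j) (hq0 : 0 < q 0) {p : ℝ} (hp : 0 ≤ p)
    (hp1 : p < 1) : 0 < Qt2 b q 0 p := by
  have hsum : q 0 ≤ ∑ j ∈ range (b + 1), q j * p ^ j := by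
    simpa using single_le_sum (f := fun j => q j * p ^ j)
      (fun j _ => mul_nonneg (hq j) (pow_nonneg hp j)) (mem_range.2 b.succ_pos)
  simp only [Qt2, mul_zero, exp_zero, mul_one]
  nlinarith

theorem Qt2_zero_right (b : ℕ) (q : ℕ → ℝ) (ξ : ℝ) : Qt2 b q ξ 0 = 1 - exp ξ * (1 - q 0) := by
  simp only [Qt2, sub_zero, one_mul, sum_range_succ', ne_eq, Nat.add_eq_zero_iff, one_ne_zero,
    and_false, not_false_eq_true, zero_pow, mul_zero, Nat.cast_add, Nat.cast_one, zero_mul,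
    sum_const_zero, pow_zero, mul_one, CharP.cast_eq_zero, exp_zero, zero_add]
  ring

theorem sum_mul_pow_mul_exp_le (hq : ∀ j, 0 ≤ q j) {p ξ : ℝ} (hp : 0 ≤ p)
    (hpξ : p * exp ξ ≤ 1) :
    ∑ j ∈ range (b + 1), q j * p ^ j * exp (j * ξ) ≤ ∑ j ∈ range (b + 1), q j := by
  refine sum_le_sum fun j _ => ?_
  calc q j * p ^ j * exp (j * ξ) = q j * (p * exp ξ) ^ j := by rw [mul_pow, ← exp_nat_mul]; ring
    _ ≤ q j := mul_le_of_le_one_right (hq j) (pow_le_one₀ (by positivity) hpξ)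

theorem Qt2_neg (hq : ∀ j, 0 ≤ q j) {p ξ : ℝ} (hp : 0 ≤ p) (hp1 : p ≤ 1)
    (hpξ : p * exp ξ ≤ 1) (hξ : 1 < exp ξ * (1 - (1 - p) * ∑ j ∈ range (b + 1), q j)) :
    Qt2 b q ξ p < 0 := by
  have hsum := sum_mul_pow_mul_exp_le (b := b) hq hp hpξ
  have hexp := exp_pos ξ
  unfold Qt2
  nlinarith [mul_le_mul_of_nonneg_left hsum (mul_nonneg (sub_nonneg.2 hp1) hexp.le)]

-- `∑ q < 1` gives `1 / (1 - (1 - p) ∑ q) < 1 / p`, so `Qt2_neg` applies below the pole.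
theorem exists_Qt2_neg (hq : ∀ j, 0 ≤ q j) (hqsum : ∑ j ∈ range (b + 1), q j < 1) {p x : ℝ}
    (hp : 0 ≤ p) (hp1 : p < 1) (hpx : p * exp x < 1) :
    ∃ c, x ≤ c ∧ p * exp c < 1 ∧ Qt2 b q c p < 0 := by
  set S := ∑ j ∈ range (b + 1), q j
  have hS : 0 ≤ S := sum_nonneg fun j _ => hq j
  set D := 1 - (1 - p) * S
  have hpD : p < D := by nlinarith
  set m := max x (log D⁻¹)
  have hDm : D⁻¹ ≤ exp m := by
    rw [← exp_log (inv_pos.2 (hp.trans_lt hpD))]; exact exp_le_exp.2 (le_max_right _ _)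
  have hpm : p * exp m < 1 := by
    rcases max_choice x (log D⁻¹) with h | h
    · rwa [show m = x from h]
    · rw [show m = log D⁻¹ from h, exp_log (inv_pos.2 (hp.trans_lt hpD)),
        ← div_eq_mul_inv, div_lt_one (hp.trans_lt hpD)]
      exact hpD
  obtain ⟨c, hmc, hpc⟩ := ((continuous_const.mul continuous_exp).continuousAt.eventually_lt
    continuousAt_const hpm).exists_gt_of_nhds
  have hDc : D⁻¹ < exp c := hDm.trans_lt (exp_lt_exp.2 hmc)
  refine ⟨c, (le_max_left _ _).trans hmc.le, hpc, Qt2_neg hq hp hp1.le hpc.le ?_⟩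
  rwa [inv_lt_iff_one_lt_mul₀ (hp.trans_lt hpD)] at hDc

noncomputable def derivQt2 (b : ℕ) (q : ℕ → ℝ) (ξ p : ℝ) : ℝ :=
  ∑ j ∈ range (b + 1), q j * exp ((j + 1) * ξ) * ((j : ℝ) * p ^ (j - 1) - ((j : ℝ) + 1) * p ^ j)

theorem Qt2_eq_sum (b : ℕ) (q : ℕ → ℝ) (ξ p : ℝ) :
    Qt2 b q ξ p =
      1 - exp ξ + ∑ j ∈ range (b + 1), q j * exp ((j + 1) * ξ) * (p ^ j - p ^ (j + 1)) := by
  rw [Qt2, mul_sum]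
  congr 1
  refine sum_congr rfl fun j _ => ?_
  rw [add_mul, one_mul, exp_add]
  ring

theorem hasDerivAt_Qt2_right (b : ℕ) (q : ℕ → ℝ) (ξ p : ℝ) :
    HasDerivAt (fun p => Qt2 b q ξ p) (derivQt2 b q ξ p) p := by
  simp only [Qt2_eq_sum]
  refine (HasDerivAt.fun_sum fun j _ => ?_).const_add _
  have h := ((hasDerivAt_pow j p).fun_sub (hasDerivAt_pow (j + 1) p)).const_mul
    (q j * exp ((j + 1) * ξ))
  rw [Nat.add_sub_cancel, Nat.cast_succ] at h
  exact h

theorem derivQt2_zero_right {b : ℕ} (hb : 1 ≤ b) (q : ℕ → ℝ) (ξ : ℝ) :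
    derivQt2 b q ξ 0 = exp ξ * (q 1 * exp ξ - q 0) := by
  obtain ⟨n, rfl⟩ := Nat.exists_eq_add_of_le' hb
  simp only [derivQt2, sum_range_succ', Nat.cast_add, Nat.cast_one, add_tsub_cancel_right, ne_eq,
    Nat.add_eq_zero_iff, one_ne_zero, and_false, not_false_eq_true, zero_pow, mul_zero, sub_zero,
    sum_const_zero, zero_add, CharP.cast_eq_zero, pow_zero, mul_one, one_mul, zero_tsub, zero_sub,
    mul_neg]
  rw [show (1 + 1) * ξ = ξ + ξ by ring, exp_add]
  ring

def IsCriticalExponent (b : ℕ) (q : ℕ → ℝ) (p ξ : ℝ) : Prop :=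
  (0 < ξ ∧ p * exp ξ < 1 ∧ Qt2 b q ξ p = 0) ∧
    ∀ ξ' : ℝ, 0 < ξ' → p * exp ξ' < 1 → Qt2 b q ξ' p = 0 → ξ' = ξ

namespace IsCriticalExponent

variable {p r : ℝ}

theorem pos (hr : IsCriticalExponent b q p r) : 0 < r := hr.1.1

theorem mul_exp_lt_one (hr : IsCriticalExponent b q p r) : p * exp r < 1 := hr.1.2.1

theorem Qt2_eq_zero (hr : IsCriticalExponent b q p r) : Qt2 b q r p = 0 := hr.1.2.2

theorem eq_of_Qt2_eq_zero (hr : IsCriticalExponent b q p r) {x : ℝ} (hx : 0 < x)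
    (hpx : p * exp x < 1) (hQ : Qt2 b q x p = 0) : x = r :=
  hr.2 x hx hpx hQ

theorem Qt2_pos_of_lt (hq : ∀ j, 0 ≤ q j) (hq0 : 0 < q 0) (hp : 0 ≤ p) (hp1 : p < 1)
    (hr : IsCriticalExponent b q p r) {x : ℝ} (hx : 0 ≤ x) (hxr : x < r) : 0 < Qt2 b q x p := by
  refine pos_of_lt_of_forall_eq_zero (f := fun ξ => Qt2 b q ξ p)
    (continuous_Qt2_left b q p).continuousOn hx
    (Qt2_zero_left_pos hq hq0 hp hp1) (fun y hy => hr.eq_of_Qt2_eq_zero hy.1 ?_) hxr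
  exact mul_exp_lt_one_of_le hp (hy.2.trans hxr.le) hr.mul_exp_lt_one

theorem Qt2_neg_of_gt (hq : ∀ j, 0 ≤ q j) (hqsum : ∑ j ∈ range (b + 1), q j < 1) (hp : 0 ≤ p)
    (hp1 : p < 1) (hr : IsCriticalExponent b q p r) {x : ℝ} (hrx : r < x)
    (hpx : p * exp x < 1) : Qt2 b q x p < 0 := by
  obtain ⟨c, hxc, hpc, hc⟩ := exists_Qt2_neg hq hqsum hp hp1 hpx
  refine neg_of_gt_of_forall_eq_zero (f := fun ξ => Qt2 b q ξ p)
    (continuous_Qt2_left b q p).continuousOn hxc hc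
    (fun y hy => hr.eq_of_Qt2_eq_zero (hr.pos.trans (hrx.trans_le hy.1)) ?_) hrx
  exact mul_exp_lt_one_of_le hp hy.2.le hpc

theorem lt_of_Qt2_pos (hq : ∀ j, 0 ≤ q j) (hqsum : ∑ j ∈ range (b + 1), q j < 1) (hp : 0 ≤ p)
    (hp1 : p < 1) (hr : IsCriticalExponent b q p r) {x : ℝ} (hpx : p * exp x < 1)
    (hx : 0 < Qt2 b q x p) : x < r := by
  by_contra! hrx
  rcases hrx.lt_or_eq with hrx | rfl
  · exact hx.not_gt (hr.Qt2_neg_of_gt hq hqsum hp hp1 hrx hpx)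
  · exact hx.ne' hr.Qt2_eq_zero

theorem gt_of_Qt2_neg (hq : ∀ j, 0 ≤ q j) (hq0 : 0 < q 0) (hp : 0 ≤ p) (hp1 : p < 1)
    (hr : IsCriticalExponent b q p r) {x : ℝ} (hx0 : 0 ≤ x) (hx : Qt2 b q x p < 0) : r < x := by
  by_contra! hxr
  rcases hxr.lt_or_eq with hxr | rfl
  · exact hx.not_gt (hr.Qt2_pos_of_lt hq hq0 hp hp1 hx0 hxr)
  · exact hx.ne hr.Qt2_eq_zero

theorem Qt2_nonpos_of_ge (hq : ∀ j, 0 ≤ q j) (hqsum : ∑ j ∈ range (b + 1), q j < 1)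
    (hp : 0 ≤ p) (hp1 : p < 1) (hr : IsCriticalExponent b q p r) {x : ℝ} (hrx : r ≤ x)
    (hpx : p * exp x < 1) : Qt2 b q x p ≤ 0 := by
  rcases hrx.lt_or_eq with hrx | rfl
  · exact (hr.Qt2_neg_of_gt hq hqsum hp hp1 hrx hpx).le
  · exact hr.Qt2_eq_zero.le

theorem lt_of_one_le_mul_exp (hr : IsCriticalExponent b q p r) (hp : 0 ≤ p) {s : ℝ}
    (hs : 1 ≤ p * exp s) : r < s :=
  exp_lt_exp.1 (lt_of_mul_lt_mul_left (hr.mul_exp_lt_one.trans_le hs) hp)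

end IsCriticalExponent

theorem continuousOn_of_isCriticalExponent (hq : ∀ j, 0 ≤ q j) (hq0 : 0 < q 0)
    (hqsum : ∑ j ∈ range (b + 1), q j < 1) {ξ₂ : ℝ → ℝ}
    (hξ₂ : ∀ p ∈ Ico (0 : ℝ) 1, IsCriticalExponent b q p (ξ₂ p)) :
    ContinuousOn ξ₂ (Ico 0 1) := by
  intro p₀ hp₀
  have hr := hξ₂ p₀ hp₀
  have hIco : ∀ᶠ p in 𝓝[Ico 0 1] p₀, p ∈ Ico (0 : ℝ) 1 := self_mem_nhdsWithin
  refine tendsto_order.2 ⟨fun a ha => ?_, fun c hc => ?_⟩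
  · have ha' : max a 0 < ξ₂ p₀ := max_lt ha hr.pos
    have hpos : ∀ᶠ p in 𝓝 p₀, 0 < Qt2 b q (max a 0) p :=
      continuousAt_const.eventually_lt (continuous_Qt2_right b q _).continuousAt
        (hr.Qt2_pos_of_lt hq hq0 hp₀.1 hp₀.2 (le_max_right a 0) ha')
    have hexp : ∀ᶠ p in 𝓝 p₀, p * exp (max a 0) < 1 :=
      (continuous_id.mul continuous_const).continuousAt.eventually_lt continuousAt_const
        (mul_exp_lt_one_of_le hp₀.1 ha'.le hr.mul_exp_lt_one)
    filter_upwards [hIco, nhdsWithin_le_nhds hpos, nhdsWithin_le_nhds hexp] with p hp hpos hexp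
    exact (le_max_left a 0).trans_lt ((hξ₂ p hp).lt_of_Qt2_pos hq hqsum hp.1 hp.2 hexp hpos)
  · have hexp : ∀ᶠ y in 𝓝 (ξ₂ p₀), p₀ * exp y < 1 :=
      (continuous_const.mul continuous_exp).continuousAt.eventually_lt continuousAt_const
        hr.mul_exp_lt_one
    obtain ⟨c', hrc', hc'c, hc'⟩ := ((eventually_lt_nhds hc).and hexp).exists_gt_of_nhds
    have hneg : ∀ᶠ p in 𝓝 p₀, Qt2 b q c' p < 0 :=
      (continuous_Qt2_right b q c').continuousAt.eventually_lt continuousAt_const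
        (hr.Qt2_neg_of_gt hq hqsum hp₀.1 hp₀.2 hrc' hc')
    filter_upwards [hIco, nhdsWithin_le_nhds hneg] with p hp hneg
    exact ((hξ₂ p hp).gt_of_Qt2_neg hq hq0 hp.1 hp.2 (hr.pos.trans hrc').le hneg).trans hc'c

theorem derivQt2_eq_zero_of_isMaxOn (hq : ∀ j, 0 ≤ q j)
    (hqsum : ∑ j ∈ range (b + 1), q j < 1) {ξ₂ : ℝ → ℝ}
    (hξ₂ : ∀ p ∈ Ico (0 : ℝ) 1, IsCriticalExponent b q p (ξ₂ p)) {c : ℝ} (hc : c ∈ Set.Ioo 0 1)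
    (hmax : IsMaxOn ξ₂ (Ico 0 1) c) : derivQt2 b q (ξ₂ c) c = 0 := by
  have hexp : ∀ᶠ p in 𝓝 c, p * exp (ξ₂ c) < 1 :=
    (continuous_id.mul continuous_const).continuousAt.eventually_lt continuousAt_const
      (hξ₂ c (Set.Ioo_subset_Ico_self hc)).mul_exp_lt_one
  have hloc : IsLocalMax (fun p => Qt2 b q (ξ₂ c) p) c := by
    filter_upwards [Ioo_mem_nhds hc.1 hc.2, hexp] with p hp hpexp
    rw [(hξ₂ c (Set.Ioo_subset_Ico_self hc)).Qt2_eq_zero]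
    exact (hξ₂ p (Set.Ioo_subset_Ico_self hp)).Qt2_nonpos_of_ge hq hqsum hp.1.le hp.2
      (hmax (Set.Ioo_subset_Ico_self hp)) hpexp
  exact hloc.hasDerivAt_eq_zero (hasDerivAt_Qt2_right b q _ c)

/-- Moving from `p = 0` towards `p > 0` raises `ξ₂` exactly when `∂Q̃₂/∂p > 0` at `(ξ₂(0), 0)`,
and since `e^{ξ₂(0)} = 1/(1 - q(0))` that derivative has the sign of `q(1) - q(0)(1 - q(0))`. -/
theorem exists_xi2_gt_xi2_zero (hq : ∀ j, 0 ≤ q j)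
    (hqb : ∀ j, b < j → q j = 0) (hq0 : 0 < q 0) (hqsum : ∑ j ∈ range (b + 1), q j < 1)
    {ξ₂ : ℝ → ℝ} (hξ₂ : ∀ p ∈ Ico (0 : ℝ) 1, IsCriticalExponent b q p (ξ₂ p))
    (hcrit : q 0 * (1 - q 0) < q 1) :
    ∃ p ∈ Ioo (0 : ℝ) 1, p * exp (ξ₂ 0) < 1 ∧ ξ₂ 0 < ξ₂ p := by
  have hr₀ := hξ₂ 0 (left_mem_Ico.2 one_pos)
  have hE : exp (ξ₂ 0) * (1 - q 0) = 1 := by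
    linarith [hr₀.Qt2_eq_zero, Qt2_zero_right b q (ξ₂ 0)]
  have hb : 1 ≤ b := by
    by_contra! hb
    have hq1 : q 1 = 0 := hqb 1 (by omega)
    have hq01 : q 0 < 1 := by simpa [Nat.lt_one_iff.1 hb] using hqsum
    nlinarith
  have hderiv : 0 < derivQt2 b q (ξ₂ 0) 0 := by
    rw [derivQt2_zero_right hb]
    have : q 1 * exp (ξ₂ 0) - q 0 = exp (ξ₂ 0) * (q 1 - q 0 * (1 - q 0)) := by
      linear_combination q 0 * hE
    rw [this]
    have := exp_pos (ξ₂ 0)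
    have := sub_pos.2 hcrit
    positivity
  have hexp : ∀ᶠ p in 𝓝 (0 : ℝ), p * exp (ξ₂ 0) < 1 :=
    (continuous_id.mul continuous_const).continuousAt.eventually_lt continuousAt_const
      (by simp)
  obtain ⟨p, ⟨hQ, hp1, hpexp⟩, hp0⟩ := (((hasDerivAt_Qt2_right b q (ξ₂ 0) 0).eventually_nhdsGT_lt
    hderiv).and ((eventually_lt_nhds one_pos).and hexp |>.filter_mono nhdsWithin_le_nhds)
    |>.and self_mem_nhdsWithin).exists
  rw [hr₀.Qt2_eq_zero] at hQ
  exact ⟨p, ⟨hp0, hp1⟩, hpexp,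
    (hξ₂ p ⟨hp0.le, hp1⟩).lt_of_Qt2_pos hq hqsum hp0.le hp1 hpexp hQ⟩

end

/-- If `q(1) > q(0)·(1 − q(0))`, there is `p* ∈ (0,1)` maximizing `ξ₂` over `[0,1)`,
and `p*` satisfies the critical-point equation
`∑_{j=0}^b q(j)·e^{(j+1)·ξ₂(p*)}·(j·(p*)^{j−1} − (j+1)·(p*)^j) = 0`. -/
theorem stmt_11 (b : ℕ) (q : ℕ → ℝ)
    (hq : ∀ j, 0 ≤ q j) (hqb : ∀ j, b < j → q j = 0) (hq0 : 0 < q 0)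
    (hqsum : ∑ j ∈ Finset.range (b + 1), q j < 1)
    (ξ₂ : ℝ → ℝ)
    (hξ₂ : ∀ p ∈ Set.Ico (0 : ℝ) 1,
      (0 < ξ₂ p ∧ p * Real.exp (ξ₂ p) < 1 ∧ Qt2 b q (ξ₂ p) p = 0) ∧
      ∀ ξ : ℝ, 0 < ξ → p * Real.exp ξ < 1 → Qt2 b q ξ p = 0 → ξ = ξ₂ p)
    (hcrit : q 0 * (1 - q 0) < q 1) :
    ∃ pstar ∈ Set.Ioo (0 : ℝ) 1, (∀ p ∈ Set.Ico (0 : ℝ) 1, ξ₂ p ≤ ξ₂ pstar) ∧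
      ∑ j ∈ Finset.range (b + 1), q j * Real.exp ((j + 1) * ξ₂ pstar) *
        ((j : ℝ) * pstar ^ (j - 1) - ((j : ℝ) + 1) * pstar ^ j) = 0 := by
  have hξ₂' : ∀ p ∈ Ico (0 : ℝ) 1, IsCriticalExponent b q p (ξ₂ p) := hξ₂
  have hξ₂₀ := hξ₂' 0 (left_mem_Ico.2 one_pos)
  obtain ⟨ps, hps, hpsexp, hgt⟩ := exists_xi2_gt_xi2_zero hq hqb hq0 hqsum hξ₂' hcrit
  have hE := exp_pos (ξ₂ 0)
  -- beyond `e^{-ξ₂(0)}` the constraint `p e^{ξ₂(p)} < 1` forces `ξ₂(p) < ξ₂(0)`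
  have htail : ∀ p ∈ Ioo (1 / exp (ξ₂ 0)) 1, ξ₂ p ≤ ξ₂ 0 := fun p hp =>
    have hp0 : 0 ≤ p := (one_div_pos.2 hE).le.trans hp.1.le
    ((hξ₂' p ⟨hp0, hp.2⟩).lt_of_one_le_mul_exp hp0 ((div_lt_iff₀ hE).1 hp.1).le).le
  have hlt_one : 1 / exp (ξ₂ 0) < 1 := (div_lt_one hE).2 (one_lt_exp_iff.2 hξ₂₀.pos)
  obtain ⟨pstar, hpstar, hmax⟩ := exists_mem_Ioo_isMaxOn
    ((continuousOn_of_isCriticalExponent hq hq0 hqsum hξ₂').mono (Icc_subset_Ico_right hlt_one))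
    hlt_one htail ⟨ps, ⟨hps.1, (le_div_iff₀ hE).2 hpsexp.le⟩, hgt⟩
  exact ⟨pstar, hpstar, fun p hp => hmax hp,
    derivQt2_eq_zero_of_isMaxOn hq hqsum hξ₂' hpstar hmax⟩
end

section
/- If ∑_{j=0}^a p₂(j) / (1−q(0))^{j+1} ≥ 1, then sup_{p ∈ [0,1)} ξ₂(p) ≥ ξ₁. -/
open Finset

/-- `Q₁(ξ) = 1 − e^ξ·∑_{j=0}^a p₂(j)·e^{jξ}`, whose unique positive root is the
critical exponent of the minimal-randomization algorithm `𝒢₁`. -/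
noncomputable def Q1 (a : ℕ) (p₂ : ℕ → ℝ) (ξ : ℝ) : ℝ :=
  1 - Real.exp ξ * ∑ j ∈ Finset.range (a + 1), p₂ j * Real.exp (j * ξ)

/-- If `∑_{j=0}^a p₂(j)/(1−q(0))^{j+1} ≥ 1`, then `sup_{p ∈ [0,1)} ξ₂(p) ≥ ξ₁`. -/
theorem stmt_13 (a b : ℕ) (q p₂ : ℕ → ℝ)
    (hq : ∀ j, 0 ≤ q j) (hp₂ : ∀ j, 0 ≤ p₂ j)
    (hqb : ∀ j, b < j → q j = 0) (hp₂a : ∀ j, a < j → p₂ j = 0)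
    (hq0 : 0 < q 0) (hp₂pos : 0 < ∑ j ∈ Finset.range (a + 1), p₂ j)
    (hsum : ∑ j ∈ Finset.range (b + 1), q j + ∑ j ∈ Finset.range (a + 1), p₂ j = 1)
    (ξ₁ : ℝ) (hξ₁ : 0 < ξ₁ ∧ Q1 a p₂ ξ₁ = 0 ∧ ∀ ξ : ℝ, 0 < ξ → Q1 a p₂ ξ = 0 → ξ = ξ₁)
    (ξ₂ : ℝ → ℝ)
    (hξ₂ : ∀ p ∈ Set.Ico (0 : ℝ) 1,
      (0 < ξ₂ p ∧ p * Real.exp (ξ₂ p) < 1 ∧ Qt2 b q (ξ₂ p) p = 0) ∧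
      ∀ ξ : ℝ, 0 < ξ → p * Real.exp ξ < 1 → Qt2 b q ξ p = 0 → ξ = ξ₂ p)
    (hcond : 1 ≤ ∑ j ∈ Finset.range (a + 1), p₂ j / (1 - q 0) ^ (j + 1)) :
    ξ₁ ≤ sSup (ξ₂ '' Set.Ico (0 : ℝ) 1) := by
  obtain ⟨hξ₁pos, hQ1, _⟩ := hξ₁
  set Q : ℝ := ∑ j ∈ Finset.range (b + 1), q j with hQdef
  have hQnn : 0 ≤ Q := Finset.sum_nonneg fun j _ => hq j
  have hQlt : Q < 1 := by linarith
  have hq0le : q 0 ≤ Q := by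
    refine Finset.single_le_sum (fun j _ => hq j) ?_
    simp
  have hq0lt : q 0 < 1 := lt_of_le_of_lt hq0le hQlt
  have h1q0 : 0 < 1 - q 0 := by linarith
  set ξ₀ : ℝ := -Real.log (1 - q 0) with hξ₀def
  have hexpξ₀ : Real.exp ξ₀ = (1 - q 0)⁻¹ := by
    rw [hξ₀def, Real.exp_neg, Real.exp_log h1q0]
  have hξ₀pos : 0 < ξ₀ := by
    have : Real.log (1 - q 0) < 0 := Real.log_neg h1q0 (by linarith)
    simpa [hξ₀def] using this
  -- ξ₂ 0 = ξ₀
  have hQt2 : Qt2 b q ξ₀ 0 = 0 := by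
    have hs : ∑ j ∈ Finset.range (b + 1), q j * (0:ℝ) ^ j * Real.exp (j * ξ₀) = q 0 := by
      rw [Finset.sum_eq_single 0]
      · simp
      · intro j _ hj; simp [zero_pow hj]
      · simp
    have : Qt2 b q ξ₀ 0 = 1 - Real.exp ξ₀ * (1 - q 0) := by
      rw [Qt2, hs]; ring
    rw [this, hexpξ₀, inv_mul_cancel₀ (ne_of_gt h1q0)]
    ring
  obtain ⟨_, huniq⟩ := hξ₂ 0 ⟨le_refl 0, zero_lt_one⟩
  have hξ₂0 : ξ₂ 0 = ξ₀ := (huniq ξ₀ hξ₀pos (by simp) hQt2).symm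
  -- ξ₁ ≤ ξ₀
  have key : ξ₁ ≤ ξ₀ := by
    by_contra h
    push_neg at h
    -- from Q1: ∑ p₂ j * exp((j+1) ξ₁) = 1
    have h1 : ∑ j ∈ Finset.range (a + 1), p₂ j * Real.exp ((j + 1) * ξ₁) = 1 := by
      have := hQ1
      rw [Q1, sub_eq_zero] at this
      rw [Finset.mul_sum] at this
      calc ∑ j ∈ Finset.range (a + 1), p₂ j * Real.exp ((j + 1) * ξ₁)
          = ∑ j ∈ Finset.range (a + 1), Real.exp ξ₁ * (p₂ j * Real.exp (j * ξ₁)) := by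
            refine Finset.sum_congr rfl fun j _ => ?_
            rw [show ((j : ℝ) + 1) * ξ₁ = (j : ℝ) * ξ₁ + ξ₁ by ring, Real.exp_add]
            ring
        _ = 1 := this.symm
    have h2 : ∀ j, p₂ j / (1 - q 0) ^ (j + 1) = p₂ j * Real.exp ((j + 1) * ξ₀) := by
      intro j
      rw [show ((j : ℝ) + 1) * ξ₀ = ((j + 1 : ℕ) : ℝ) * ξ₀ by push_cast; ring,
        Real.exp_nat_mul, hexpξ₀, div_eq_mul_inv, inv_pow]
    rw [Finset.sum_congr rfl (fun j _ => h2 j)] at hcond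
    obtain ⟨j₀, hj₀mem, hj₀⟩ : ∃ j ∈ Finset.range (a + 1), 0 < p₂ j := by
      by_contra hc
      push_neg at hc
      have : ∑ j ∈ Finset.range (a + 1), p₂ j ≤ 0 :=
        Finset.sum_nonpos fun j hj => hc j hj
      linarith
    have hlt : ∑ j ∈ Finset.range (a + 1), p₂ j * Real.exp ((j + 1) * ξ₀)
        < ∑ j ∈ Finset.range (a + 1), p₂ j * Real.exp ((j + 1) * ξ₁) := by
      refine Finset.sum_lt_sum (fun j _ => ?_) ⟨j₀, hj₀mem, ?_⟩
      · exact mul_le_mul_of_nonneg_left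
          (Real.exp_le_exp.2 (by nlinarith [Nat.cast_nonneg (α := ℝ) j])) (hp₂ j)
      · exact mul_lt_mul_of_pos_left
          (Real.exp_lt_exp.2 (by nlinarith [Nat.cast_nonneg (α := ℝ) j₀])) hj₀
    rw [h1] at hlt
    linarith
  -- BddAbove
  have hbdd : BddAbove (ξ₂ '' Set.Ico (0 : ℝ) 1) := by
    refine ⟨-Real.log (1 - Q), ?_⟩
    rintro x ⟨p, hp, rfl⟩
    obtain ⟨⟨hpos, hpe, hzero⟩, _⟩ := hξ₂ p hp
    set ξ := ξ₂ p
    have h1Q : 0 < 1 - Q := by linarith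
    have hSle : ∑ j ∈ Finset.range (b + 1), q j * p ^ j * Real.exp (j * ξ) ≤ Q := by
      refine Finset.sum_le_sum fun j _ => ?_
      have hpe' : p * Real.exp ξ < 1 := hpe
      have hpej : (p * Real.exp ξ) ^ j ≤ 1 :=
        pow_le_one₀ (mul_nonneg hp.1 (Real.exp_pos ξ).le) hpe'.le
      have : p ^ j * Real.exp (j * ξ) = (p * Real.exp ξ) ^ j := by
        rw [mul_pow, Real.exp_nat_mul]
      calc q j * p ^ j * Real.exp (j * ξ) = q j * (p * Real.exp ξ) ^ j := by
            rw [mul_assoc, this]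
        _ ≤ q j * 1 := mul_le_mul_of_nonneg_left hpej (hq j)
        _ = q j := mul_one _
    have hSnn : 0 ≤ ∑ j ∈ Finset.range (b + 1), q j * p ^ j * Real.exp (j * ξ) :=
      Finset.sum_nonneg fun j _ => mul_nonneg
        (mul_nonneg (hq j) (pow_nonneg hp.1 j)) (Real.exp_pos _).le
    have hexpnn : (0:ℝ) < Real.exp ξ := Real.exp_pos ξ
    have hA : Real.exp ξ * ∑ j ∈ Finset.range (b + 1), q j * p ^ j * Real.exp (j * ξ)
        ≤ Real.exp ξ * Q := mul_le_mul_of_nonneg_left hSle hexpnn.le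
    have hB : (1 - p) * Real.exp ξ * ∑ j ∈ Finset.range (b + 1), q j * p ^ j * Real.exp (j * ξ)
        ≤ Real.exp ξ * ∑ j ∈ Finset.range (b + 1), q j * p ^ j * Real.exp (j * ξ) := by
      rw [mul_assoc]
      exact mul_le_of_le_one_left (mul_nonneg hexpnn.le hSnn) (by linarith [hp.1])
    have hineq : Real.exp ξ * (1 - Q) ≤ 1 := by
      have hz := hzero
      rw [Qt2] at hz
      nlinarith [hA, hB]
    have hexple : Real.exp ξ ≤ (1 - Q)⁻¹ := by
      rw [inv_eq_one_div, le_div_iff₀ h1Q]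
      exact hineq
    calc ξ = Real.log (Real.exp ξ) := (Real.log_exp ξ).symm
      _ ≤ Real.log ((1 - Q)⁻¹) := Real.log_le_log hexpnn hexple
      _ = -Real.log (1 - Q) := by rw [Real.log_inv]
  have hmem : ξ₂ 0 ∈ ξ₂ '' Set.Ico (0 : ℝ) 1 :=
    ⟨0, ⟨le_refl 0, zero_lt_one⟩, rfl⟩
  calc ξ₁ ≤ ξ₀ := key
    _ = ξ₂ 0 := hξ₂0.symm
    _ ≤ sSup (ξ₂ '' Set.Ico (0 : ℝ) 1) := le_csSup hbdd hmem
end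

section
/- For every ξ with 0 < ξ < −log(1 − q(0)) there exists p ∈ [0, e^{−ξ}) such that Q̃₂(ξ,p) = 0. -/
open Finset

/-- For every `ξ` with `0 < ξ < −log(1 − q(0))` there exists `p ∈ [0, e^{−ξ})`
with `Q̃₂(ξ,p) = 0`. -/
theorem stmt_15 (b : ℕ) (q : ℕ → ℝ)
    (hq : ∀ j, 0 ≤ q j) (hqb : ∀ j, b < j → q j = 0) (hq0 : 0 < q 0)
    (hqsum : ∑ j ∈ Finset.range (b + 1), q j < 1) :
    ∀ ξ : ℝ, 0 < ξ → ξ < -Real.log (1 - q 0) →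
      ∃ p ∈ Set.Ico (0 : ℝ) (Real.exp (-ξ)), Qt2 b q ξ p = 0 := by
  intro ξ hξ hξ2
  set c := Real.exp (-ξ) with hc
  have hq0lt1 : q 0 < 1 := by
    have h0 : q 0 ≤ ∑ j ∈ Finset.range (b + 1), q j := by
      exact Finset.single_le_sum (fun j _ => hq j) (Finset.mem_range.2 (Nat.succ_pos b))
    linarith
  have h1q0 : (0:ℝ) < 1 - q 0 := by linarith
  -- f 0 > 0
  have hf0 : 0 < Qt2 b q ξ 0 := by
    have hsum0 : ∑ j ∈ Finset.range (b + 1), q j * (0:ℝ) ^ j * Real.exp (j * ξ) = q 0 := by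
      rw [Finset.sum_eq_single 0]
      · simp
      · intro j hj hj0
        rcases Nat.exists_eq_succ_of_ne_zero hj0 with ⟨k, rfl⟩
        simp [pow_succ]
      · intro h; exact absurd (Finset.mem_range.2 (Nat.succ_pos b)) h
    have : Real.exp ξ < (1 - q 0)⁻¹ := by
      have : ξ < Real.log (1 - q 0)⁻¹ := by
        rw [Real.log_inv]; linarith
      calc Real.exp ξ < Real.exp (Real.log (1 - q 0)⁻¹) := Real.exp_lt_exp.2 this
        _ = (1 - q 0)⁻¹ := Real.exp_log (by positivity)
    have h2 : Real.exp ξ * (1 - q 0) < 1 := by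
      rw [← lt_div_iff₀ h1q0] at *
      simpa [div_eq_mul_inv] using this
    simp only [Qt2, hsum0]
    nlinarith [Real.exp_pos ξ]
  -- f c < 0
  have hfc : Qt2 b q ξ c < 0 := by
    have hsumc : ∑ j ∈ Finset.range (b + 1), q j * c ^ j * Real.exp (j * ξ)
        = ∑ j ∈ Finset.range (b + 1), q j := by
      apply Finset.sum_congr rfl
      intro j _
      have : c ^ j * Real.exp (j * ξ) = 1 := by
        rw [hc, ← Real.exp_nat_mul, ← Real.exp_add]
        ring_nf
        simp [Real.exp_zero]
      rw [mul_assoc, this, mul_one]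
    have hc1 : c < 1 := by
      rw [hc]
      have : (-ξ) < 0 := by linarith
      calc Real.exp (-ξ) < Real.exp 0 := Real.exp_lt_exp.2 this
        _ = 1 := Real.exp_zero
    have he1 : 1 < Real.exp ξ := by
      calc (1:ℝ) = Real.exp 0 := (Real.exp_zero).symm
        _ < Real.exp ξ := Real.exp_lt_exp.2 hξ
    have hcexp : c * Real.exp ξ = 1 := by
      rw [hc, ← Real.exp_add]; simp
    have hsumnn : 0 ≤ ∑ j ∈ Finset.range (b + 1), q j :=
      Finset.sum_nonneg fun j _ => hq j
    simp only [Qt2, hsumc]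
    nlinarith
  -- IVT
  have hcpos : (0:ℝ) ≤ c := le_of_lt (Real.exp_pos _)
  have hcont : ContinuousOn (fun p => Qt2 b q ξ p) (Set.Icc 0 c) := by
    apply Continuous.continuousOn
    unfold Qt2
    continuity
  have := intermediate_value_Ico' hcpos hcont
  have hmem : (0:ℝ) ∈ Set.Ioc (Qt2 b q ξ c) (Qt2 b q ξ 0) := ⟨hfc, le_of_lt hf0⟩
  obtain ⟨p, hp, hp0⟩ := this hmem
  exact ⟨p, hp, hp0⟩
end

section
/- Suppose m := min_{0 ≤ j ≤ a} p₂(j) > 0 and a ≥ −log(1 + q(0)/m)/log(1 − q(0)) − 1. Then ∑_{j=0}^a p₂(j)/(1−q(0))^{j+1} ≥ 1, and consequently sup_{p ∈ [0,1)} ξ₂(p) ≥ ξ₁. -/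
open Finset

/-!
With `r = 1 − q(0)`, the hypothesis on `a` says `r^{-(a+1)} ≥ 1 + q(0)/m`; bounding `p₂(j)` below
by `m` leaves the geometric sum `m ∑_{j ≤ a} r^{-(j+1)} = m (r^{-(a+1)} − 1)/q(0) ≥ 1`.
For the exponents, `ξ* = −log r` is `ξ₂(0)` (restart at every step), and the inequality just
proved says `Q₁(ξ*) ≤ 0`, so `ξ₁ ≤ ξ*` because `Q₁` is antitone. The supremum is a genuine one
since every `ξ₂(p)` is at most `−log ∑_j p₂(j)`.
-/

theorem le_inv_pow_of_neg_log_div_log_le {r x : ℝ} {n : ℕ} (hr₀ : 0 < r) (hr₁ : r < 1)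
    (hx : 0 < x) (h : -Real.log x / Real.log r ≤ n) : x ≤ r⁻¹ ^ n := by
  have hlog : Real.log x ≤ Real.log (r⁻¹ ^ n) := by
    rw [Real.log_pow, Real.log_inv]
    have := (div_le_iff_of_neg (Real.log_neg hr₀ hr₁)).mp h
    linarith
  exact (Real.log_le_log_iff hx (by positivity)).mp hlog

theorem one_sub_mul_sum_inv_pow_succ {r : ℝ} (hr : r ≠ 0) (n : ℕ) :
    (1 - r) * ∑ j ∈ range n, (r ^ (j + 1))⁻¹ = r⁻¹ ^ n - 1 := by
  rw [← geom_sum_mul r⁻¹ n, mul_comm, sum_mul, sum_mul]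
  refine sum_congr rfl fun j _ => ?_
  rw [← inv_pow, pow_succ]
  field_simp

theorem one_le_sum_div_one_sub_pow_succ {c m : ℝ} {w : ℕ → ℝ} {n : ℕ} (hc₀ : 0 < c)
    (hc₁ : c < 1) (hm : 0 < m) (hw : ∀ j ∈ range n, m ≤ w j)
    (hn : 1 + c / m ≤ (1 - c)⁻¹ ^ n) :
    1 ≤ ∑ j ∈ range n, w j / (1 - c) ^ (j + 1) := by
  have hr : 0 < 1 - c := by linarith
  have hcm : c ≤ m * ((1 - c)⁻¹ ^ n - 1) := by
    rw [← div_le_iff₀' hm]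
    linarith
  calc (1 : ℝ) ≤ m * ((1 - c)⁻¹ ^ n - 1) / c := by rwa [le_div_iff₀ hc₀, one_mul]
    _ = ∑ j ∈ range n, m / (1 - c) ^ (j + 1) := by
      rw [← one_sub_mul_sum_inv_pow_succ hr.ne', sub_sub_cancel, mul_sum, mul_sum, sum_div]
      refine sum_congr rfl fun j _ => ?_
      field_simp
    _ ≤ ∑ j ∈ range n, w j / (1 - c) ^ (j + 1) :=
      sum_le_sum fun j hj => div_le_div_of_nonneg_right (hw j hj) (by positivity)

theorem Q1_antitone {a : ℕ} {p₂ : ℕ → ℝ} (hp₂ : ∀ j, 0 ≤ p₂ j) : Antitone (Q1 a p₂) := by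
  intro x y hxy
  unfold Q1
  gcongr with j
  · exact sum_nonneg fun j _ => mul_nonneg (hp₂ j) (Real.exp_pos _).le
  · exact hp₂ j

theorem Q1_neg_log (a : ℕ) (p₂ : ℕ → ℝ) {r : ℝ} (hr : 0 < r) :
    Q1 a p₂ (-Real.log r) = 1 - ∑ j ∈ range (a + 1), p₂ j / r ^ (j + 1) := by
  rw [Q1, mul_sum]
  congr 1
  refine sum_congr rfl fun j _ => ?_
  rw [Real.exp_nat_mul, Real.exp_neg, Real.exp_log hr, pow_succ, div_eq_mul_inv, mul_inv,
    inv_pow]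
  ring

theorem Qt2_neg_log_one_sub_zero (b : ℕ) (q : ℕ → ℝ) (hq₀ : q 0 < 1) :
    Qt2 b q (-Real.log (1 - q 0)) 0 = 0 := by
  have hsum : ∑ j ∈ range (b + 1), q j * (0 : ℝ) ^ j * Real.exp (j * -Real.log (1 - q 0))
      = q 0 := by
    rw [sum_eq_single_of_mem 0 (mem_range.mpr b.succ_pos) fun j _ hj => by simp [hj]]
    simp
  have hr : 1 - q 0 ≠ 0 := by linarith
  rw [Qt2, hsum, Real.exp_neg, Real.exp_log (by linarith)]
  field_simp
  ring

theorem le_neg_log_of_Qt2_eq_zero {b : ℕ} {q : ℕ → ℝ} {ξ p P : ℝ} (hq : ∀ j, 0 ≤ q j)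
    (hp₀ : 0 ≤ p) (hp₁ : p ≤ 1) (hpξ : p * Real.exp ξ < 1) (hP : 0 < P)
    (hsum : ∑ j ∈ range (b + 1), q j + P = 1) (hroot : Qt2 b q ξ p = 0) :
    ξ ≤ -Real.log P := by
  set E := Real.exp ξ with hE
  have hE₀ : 0 < E := Real.exp_pos ξ
  set S := ∑ j ∈ range (b + 1), q j * p ^ j * Real.exp (j * ξ)
  have hS : S ≤ 1 - P := by
    rw [← hsum, add_sub_cancel_right]
    refine sum_le_sum fun j _ => ?_
    rw [Real.exp_nat_mul, mul_assoc, ← mul_pow]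
    exact mul_le_of_le_one_right (hq j) (pow_le_one₀ (by positivity) hpξ.le)
  have hS₀ : 0 ≤ S := sum_nonneg fun j _ => by have := hq j; positivity
  suffices E * P ≤ 1 by
    rwa [← Real.exp_le_exp, Real.exp_neg, Real.exp_log hP, ← hE, ← one_div, le_div_iff₀ hP]
  have hroot' : E - 1 = (1 - p) * E * S := by rw [Qt2] at hroot; linarith
  nlinarith [mul_le_mul_of_nonneg_left hS (mul_nonneg (sub_nonneg.mpr hp₁) hE₀.le),
    mul_nonneg (mul_nonneg hp₀ hE₀.le) (hS₀.trans hS)]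

theorem stmt_18_general (a b : ℕ) (q p₂ : ℕ → ℝ)
    (hq : ∀ j, 0 ≤ q j) (hp₂ : ∀ j, 0 ≤ p₂ j)
    (hq0 : 0 < q 0) (hp₂pos : 0 < ∑ j ∈ Finset.range (a + 1), p₂ j)
    (hsum : ∑ j ∈ Finset.range (b + 1), q j + ∑ j ∈ Finset.range (a + 1), p₂ j = 1)
    (ξ₁ : ℝ) (hξ₁ : 0 < ξ₁ ∧ Q1 a p₂ ξ₁ = 0 ∧ ∀ ξ : ℝ, 0 < ξ → Q1 a p₂ ξ = 0 → ξ = ξ₁)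
    (ξ₂ : ℝ → ℝ)
    (hξ₂ : ∀ p ∈ Set.Ico (0 : ℝ) 1,
      (0 < ξ₂ p ∧ p * Real.exp (ξ₂ p) < 1 ∧ Qt2 b q (ξ₂ p) p = 0) ∧
      ∀ ξ : ℝ, 0 < ξ → p * Real.exp ξ < 1 → Qt2 b q ξ p = 0 → ξ = ξ₂ p)
    (m : ℝ) (hm : m = (Finset.range (a + 1)).inf' (Finset.nonempty_range_add_one) p₂)
    (hmpos : 0 < m)
    (ha : (a : ℝ) ≥ -Real.log (1 + q 0 / m) / Real.log (1 - q 0) - 1) :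
    1 ≤ ∑ j ∈ Finset.range (a + 1), p₂ j / (1 - q 0) ^ (j + 1) ∧
      ξ₁ ≤ sSup (ξ₂ '' Set.Ico (0 : ℝ) 1) := by
  obtain ⟨-, hξ₁root, hξ₁uniq⟩ := hξ₁
  have hq0_lt : q 0 < 1 := by
    have := single_le_sum (fun j _ => hq j) (mem_range.mpr b.succ_pos)
    linarith
  have hpow : 1 + q 0 / m ≤ (1 - q 0)⁻¹ ^ (a + 1) :=
    le_inv_pow_of_neg_log_div_log_le (by linarith) (by linarith) (by positivity)
      (by push_cast; linarith)
  have hineq : 1 ≤ ∑ j ∈ range (a + 1), p₂ j / (1 - q 0) ^ (j + 1) :=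
    one_le_sum_div_one_sub_pow_succ hq0 hq0_lt hmpos (fun j hj => hm ▸ inf'_le p₂ hj) hpow
  have hξ_pos : 0 < -Real.log (1 - q 0) := neg_pos.mpr (Real.log_neg (by linarith) (by linarith))
  have hξ₁_le : ξ₁ ≤ -Real.log (1 - q 0) := by
    by_contra! hlt
    have hQ1 : Q1 a p₂ (-Real.log (1 - q 0)) ≤ 0 := by
      rw [Q1_neg_log a p₂ (by linarith)]; linarith
    have := le_antisymm hQ1 (hξ₁root ▸ Q1_antitone hp₂ hlt.le)
    exact hlt.ne (hξ₁uniq _ hξ_pos this)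
  have hξ₂_zero : ξ₂ 0 = -Real.log (1 - q 0) :=
    ((hξ₂ 0 ⟨le_rfl, one_pos⟩).2 _ hξ_pos (by simp) (Qt2_neg_log_one_sub_zero b q hq0_lt)).symm
  have hbdd : BddAbove (ξ₂ '' Set.Ico 0 1) := by
    refine ⟨-Real.log (∑ j ∈ range (a + 1), p₂ j), Set.forall_mem_image.mpr fun p hp => ?_⟩
    obtain ⟨⟨-, hpξ, hroot⟩, -⟩ := hξ₂ p hp
    exact le_neg_log_of_Qt2_eq_zero hq hp.1 hp.2.le hpξ hp₂pos hsum hroot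
  exact ⟨hineq, hξ₁_le.trans (hξ₂_zero ▸ le_csSup hbdd ⟨0, ⟨le_rfl, one_pos⟩, rfl⟩)⟩

/-- If `m := min_{0 ≤ j ≤ a} p₂(j) > 0` and
`a ≥ −log(1 + q(0)/m)/log(1 − q(0)) − 1`, then
`∑_{j=0}^a p₂(j)/(1−q(0))^{j+1} ≥ 1` and consequently
`sup_{p ∈ [0,1)} ξ₂(p) ≥ ξ₁`. -/
theorem stmt_18 (a b : ℕ) (q p₂ : ℕ → ℝ)
    (hq : ∀ j, 0 ≤ q j) (hp₂ : ∀ j, 0 ≤ p₂ j)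
    (hqb : ∀ j, b < j → q j = 0) (hp₂a : ∀ j, a < j → p₂ j = 0)
    (hq0 : 0 < q 0) (hp₂pos : 0 < ∑ j ∈ Finset.range (a + 1), p₂ j)
    (hsum : ∑ j ∈ Finset.range (b + 1), q j + ∑ j ∈ Finset.range (a + 1), p₂ j = 1)
    (ξ₁ : ℝ) (hξ₁ : 0 < ξ₁ ∧ Q1 a p₂ ξ₁ = 0 ∧ ∀ ξ : ℝ, 0 < ξ → Q1 a p₂ ξ = 0 → ξ = ξ₁)
    (ξ₂ : ℝ → ℝ)
    (hξ₂ : ∀ p ∈ Set.Ico (0 : ℝ) 1,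
      (0 < ξ₂ p ∧ p * Real.exp (ξ₂ p) < 1 ∧ Qt2 b q (ξ₂ p) p = 0) ∧
      ∀ ξ : ℝ, 0 < ξ → p * Real.exp ξ < 1 → Qt2 b q ξ p = 0 → ξ = ξ₂ p)
    (m : ℝ) (hm : m = (Finset.range (a + 1)).inf' (Finset.nonempty_range_add_one) p₂)
    (hmpos : 0 < m)
    (ha : (a : ℝ) ≥ -Real.log (1 + q 0 / m) / Real.log (1 - q 0) - 1) :
    1 ≤ ∑ j ∈ Finset.range (a + 1), p₂ j / (1 - q 0) ^ (j + 1) ∧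
      ξ₁ ≤ sSup (ξ₂ '' Set.Ico (0 : ℝ) 1) :=
  stmt_18_general a b q p₂ hq hp₂ hq0 hp₂pos hsum ξ₁ hξ₁ ξ₂ hξ₂ m hm hmpos ha
end
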